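/- arXiv:2003.03664 — 8 statements merged into one kernel-verified Lean document; each statement's English description precedes it below -/
import Mathlib

section
/- Let f, g : [0,1] → [0,1] be Lebesgue measurable. If for every finite binary word u we have t(u,f) = t(u,g), then f = g almost everywhere. -/
open MeasureTheory

/-- Density of the binary word `u` in the function `f : [0,1] → [0,1]`:
`t(u,f) = ℓ! ∫_{0 ≤ x₁ < ⋯ < x_ℓ ≤ 1} ∏ f^{uᵢ}(xᵢ) dx`. -/
noncomputable def wordDensity {ℓ : ℕ} (u : Fin ℓ → Bool) (f : ℝ → ℝ) : ℝ :=
  (Nat.factorial ℓ : ℝ) *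
    ∫ x : Fin ℓ → ℝ in
      {x | (∀ i, x i ∈ Set.Icc (0:ℝ) 1) ∧ (∀ i j : Fin ℓ, i < j → x i < x j)},
      ∏ i, (if u i then f (x i) else 1 - f (x i))

/-- The interval (cut) distance `d_□(f,g) = sup_{I ⊆ [0,1] interval} |∫_I (f-g)|`. -/
noncomputable def cutDist (f g : ℝ → ℝ) : ℝ :=
  sSup {y | ∃ a b : ℝ, 0 ≤ a ∧ a ≤ b ∧ b ≤ 1 ∧ y = |∫ x in a..b, (f x - g x)|}

/-!
Summing `t(u, f)` over all words `u` of length `n + 1` ending in `1` collapses the integrand to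
`f(x_{n+1})`, because every other position contributes `f + (1 - f) = 1`. Integrating out
`x₁ < ⋯ < x_n < x_{n+1} = t`, an ordered simplex of volume `tⁿ / n!`, leaves
`(n + 1) ∫₀¹ f(t) tⁿ dt`. Hence `f` and `g` have the same moments on `[0,1]`; by Weierstrass
approximation `f - g` then integrates to zero against every continuous function, so `f = g` a.e.
-/

open Set
open scoped ENNReal Nat

def orderedTuples (n : ℕ) (s : Set ℝ) : Set (Fin n → ℝ) :=
  {x | (∀ i, x i ∈ s) ∧ StrictMono x}

theorem Fin.strictMono_snoc_iff {α : Type*} [Preorder α] {n : ℕ} {z : Fin n → α} {t : α} :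
    StrictMono (Fin.snoc z t : Fin (n + 1) → α) ↔ StrictMono z ∧ ∀ i, z i < t := by
  refine ⟨fun h => ⟨fun i j hij => ?_, fun i => ?_⟩, fun ⟨hz, ht⟩ i j hij => ?_⟩
  · simpa using h (Fin.castSucc_lt_castSucc_iff.2 hij)
  · simpa using h (Fin.castSucc_lt_last i)
  · induction j using Fin.lastCases with
    | last =>
      obtain ⟨i, rfl⟩ := Fin.exists_castSucc_eq.2 hij.ne
      simpa using ht i
    | cast j =>
      obtain ⟨i, rfl⟩ := Fin.exists_castSucc_eq.2 (hij.trans (Fin.castSucc_lt_last j)).ne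
      simpa using hz (Fin.castSucc_lt_castSucc_iff.1 hij)

theorem snoc_mem_orderedTuples_iff {n : ℕ} {s : Set ℝ} {z : Fin n → ℝ} {t : ℝ} :
    Fin.snoc z t ∈ orderedTuples (n + 1) s ↔ t ∈ s ∧ z ∈ orderedTuples n (s ∩ Iio t) := by
  simp only [orderedTuples, mem_ofPred_eq, Fin.strictMono_snoc_iff, Fin.forall_fin_succ',
    Fin.snoc_castSucc, Fin.snoc_last, mem_inter_iff, mem_Iio, forall_and]
  tauto

theorem measurableSet_orderedTuples {s : Set ℝ} (hs : MeasurableSet s) (n : ℕ) :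
    MeasurableSet (orderedTuples n s) := by
  have : orderedTuples n s =
      univ.pi (fun _ => s) ∩ ⋂ i, ⋂ j, ⋂ (_ : i < j), {x | x i < x j} := by
    ext x; simp [orderedTuples, StrictMono]
  rw [this]
  exact (MeasurableSet.univ_pi fun _ => hs).inter <| .iInter fun i => .iInter fun j =>
    .iInter fun _ => measurableSet_lt (measurable_pi_apply i) (measurable_pi_apply j)

theorem lintegral_orderedTuples_succ {s : Set ℝ} (hs : MeasurableSet s) {F : ℝ → ℝ≥0∞}
    (hF : Measurable F) (n : ℕ) :
    ∫⁻ x in orderedTuples (n + 1) s, F (x (Fin.last n)) =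
      ∫⁻ t in s, F t * volume (orderedTuples n (s ∩ Iio t)) := by
  let e := MeasurableEquiv.piFinSuccAbove (fun _ : Fin (n + 1) => ℝ) (Fin.last n)
  let S := e '' orderedTuples (n + 1) s
  have hS : MeasurableSet S := e.measurableSet_image.2 (measurableSet_orderedTuples hs _)
  have hmem (t : ℝ) (z : Fin n → ℝ) : (t, z) ∈ S ↔ t ∈ s ∧ z ∈ orderedTuples n (s ∩ Iio t) := by
    simp only [S, e, MeasurableEquiv.image_eq_preimage_symm, mem_preimage,
      MeasurableEquiv.piFinSuccAbove_symm_apply, Fin.insertNthEquiv, Equiv.coe_fn_mk,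
      Fin.insertNth_last', snoc_mem_orderedTuples_iff]
  calc ∫⁻ x in orderedTuples (n + 1) s, F (x (Fin.last n))
      = ∫⁻ p in S, F p.1 ∂(volume.prod volume) :=
        (volume_preserving_piFinSuccAbove _ _).setLIntegral_comp_emb e.measurableEmbedding
          (fun p => F p.1) _
    _ = ∫⁻ t, ∫⁻ z, S.indicator (fun p => F p.1) (t, z) := by
        rw [← lintegral_indicator hS, lintegral_prod]
        exact ((hF.comp measurable_fst).indicator hS).aemeasurable
    _ = ∫⁻ t, F t * volume (Prod.mk t ⁻¹' S) := by
        congr 1 with t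
        exact lintegral_indicator_const (measurable_prodMk_left hS) (F t)
    _ = ∫⁻ t in s, F t * volume (orderedTuples n (s ∩ Iio t)) := by
        rw [← lintegral_indicator hs]
        congr 1 with t
        by_cases ht : t ∈ s
        · simp only [indicator_of_mem ht]
          congr 2 with z
          simp [hmem, ht]
        · simp [ht, preimage, hmem]

theorem volume_orderedTuples_Ico (n : ℕ) {a b : ℝ} (hab : a ≤ b) :
    volume (orderedTuples n (Ico a b)) = ENNReal.ofReal ((b - a) ^ n / n !) := by
  induction n generalizing b with
  | zero => simp [orderedTuples, Subsingleton.strictMono, volume_pi]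
  | succ n ih =>
    have hslice := lintegral_orderedTuples_succ measurableSet_Ico (F := fun _ => 1)
      measurable_const n (s := Ico a b)
    simp only [setLIntegral_one, one_mul] at hslice
    rw [hslice, setLIntegral_congr_fun measurableSet_Ico fun t ht => by
      rw [Ico_inter_Iio, min_eq_right ht.2.le, ih ht.1]]
    rw [← ofReal_integral_eq_lintegral_ofReal, integral_Ico_eq_integral_Ioc,
      ← intervalIntegral.integral_of_le hab, intervalIntegral.integral_div,
      intervalIntegral.integral_comp_sub_right (fun t => t ^ n), integral_pow]
    · rw [sub_self, zero_pow n.succ_ne_zero, sub_zero, Nat.factorial_succ]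
      push_cast
      field_simp
    · exact (continuous_pow n |>.comp (continuous_sub_right a) |>.div_const _).integrableOn_Icc
        |>.mono_set Ico_subset_Icc_self
    · filter_upwards [ae_restrict_mem measurableSet_Ico] with t ht
      exact div_nonneg (pow_nonneg (sub_nonneg.2 ht.1) n) (by positivity)

theorem setIntegral_orderedTuples_last {f : ℝ → ℝ} (hf : Measurable f) {a b : ℝ}
    (hf0 : ∀ t ∈ Icc a b, 0 ≤ f t) (n : ℕ) :
    n ! * ∫ x in orderedTuples (n + 1) (Icc a b), f (x (Fin.last n)) =
      ∫ t in Icc a b, f t * (t - a) ^ n := by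
  have hslice (t : ℝ) (ht : t ∈ Icc a b) : Icc a b ∩ Iio t = Ico a t := by
    ext x
    simp only [mem_inter_iff, mem_Icc, mem_Iio, mem_Ico]
    exact ⟨fun h => ⟨h.1.1, h.2⟩, fun h => ⟨⟨h.1, h.2.le.trans ht.2⟩, h.2⟩⟩
  have hlast : ∫ x in orderedTuples (n + 1) (Icc a b), f (x (Fin.last n)) =
      ∫ t in Icc a b, f t * ((t - a) ^ n / n !) := by
    rw [integral_eq_lintegral_of_nonneg_ae, integral_eq_lintegral_of_nonneg_ae,
      lintegral_orderedTuples_succ measurableSet_Icc hf.ennreal_ofReal]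
    · congr 1
      refine setLIntegral_congr_fun measurableSet_Icc fun t ht => ?_
      rw [hslice t ht, volume_orderedTuples_Ico n ht.1, ENNReal.ofReal_mul (hf0 t ht)]
    · filter_upwards [ae_restrict_mem measurableSet_Icc] with t ht
      exact mul_nonneg (hf0 t ht) (div_nonneg (pow_nonneg (sub_nonneg.2 ht.1) n) (by positivity))
    · fun_prop
    · filter_upwards [ae_restrict_mem (measurableSet_orderedTuples measurableSet_Icc _)]
        with x hx
      exact hf0 _ (hx.1 _)
    · exact (hf.comp (measurable_pi_apply _)).aestronglyMeasurable
  rw [hlast, ← integral_const_mul]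
  congr 1 with t
  field_simp

theorem sum_prod_ite_of_apply_eq_true {ι R : Type*} [Fintype ι] [DecidableEq ι] [CommRing R]
    (p : ι → R) (k : ι) :
    ∑ u : ι → Bool with u k = true, ∏ i, (if u i then p i else 1 - p i) = p k := by
  -- the `i`-th factor, with the branch `u k = false` killed: the filtered sum becomes a full
  -- sum of products, which factorises as `∏ i, (d i true + d i false)`
  let d (i : ι) (b : Bool) : R := if b then p i else if i = k then 0 else 1 - p i
  have hd (u : ι → Bool) :
      (if u k = true then ∏ i, (if u i then p i else 1 - p i) else 0) = ∏ i, d i (u i) := by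
    split_ifs with hu
    · exact Finset.prod_congr rfl fun i _ => by
        by_cases hi : i = k <;> cases hui : u i <;> simp_all [d]
    · exact (Finset.prod_eq_zero (Finset.mem_univ k) (by simp [d, hu])).symm
  rw [Finset.sum_filter, Fintype.sum_congr _ _ hd, ← Fintype.prod_sum,
    Fintype.prod_eq_single k fun i hi => by simp [d, hi]]
  simp [d]

theorem integrableOn_of_forall_mem_Icc_zero_one {α : Type*} [MeasurableSpace α]
    {μ : Measure α} {s : Set α} (hs : MeasurableSet s) (hμs : μ s ≠ ∞) {f : α → ℝ}
    (hf : AEStronglyMeasurable f μ) (h : ∀ x ∈ s, f x ∈ Icc 0 1) : IntegrableOn f s μ :=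
  Measure.integrableOn_of_bounded hμs hf (M := 1) <| by
    filter_upwards [ae_restrict_mem hs] with x hx
    rw [Real.norm_eq_abs, abs_le]
    exact ⟨by linarith [(h x hx).1], (h x hx).2⟩

theorem sum_wordDensity_of_last_eq_true {f : ℝ → ℝ} (hf : Measurable f)
    (hf1 : ∀ x ∈ Icc (0 : ℝ) 1, f x ∈ Icc 0 1) (n : ℕ) :
    ∑ u : Fin (n + 1) → Bool with u (Fin.last n) = true, wordDensity u f =
      (n + 1) * ∫ t in Icc 0 1, f t * t ^ n := by
  let box := orderedTuples (n + 1) (Icc (0 : ℝ) 1)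
  have hbox : MeasurableSet box := measurableSet_orderedTuples measurableSet_Icc _
  -- `StrictMono x` unfolds to the ordering clause in `wordDensity`
  have hword (u : Fin (n + 1) → Bool) : wordDensity u f =
      (n + 1)! * ∫ x in box, ∏ i, (if u i then f (x i) else 1 - f (x i)) := rfl
  have hint (u : Fin (n + 1) → Bool) :
      IntegrableOn (fun x => ∏ i, (if u i then f (x i) else 1 - f (x i))) box := by
    refine integrableOn_of_forall_mem_Icc_zero_one hbox ?_ ?_ fun x hx => ?_
    · have hsub : box ⊆ Icc 0 1 := fun x hx => ⟨fun i => (hx.1 i).1, fun i => (hx.1 i).2⟩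
      exact ((measure_mono hsub).trans_lt isCompact_Icc.measure_lt_top).ne
    · refine (Finset.measurable_prod _ fun i _ => ?_).aestronglyMeasurable
      cases u i <;> simp only [Bool.false_eq_true, ↓reduceIte] <;> fun_prop
    · have hfx (i) : (if u i then f (x i) else 1 - f (x i)) ∈ Icc (0 : ℝ) 1 := by
        have := hf1 _ (hx.1 i)
        cases u i <;> simp only [Bool.false_eq_true, ↓reduceIte, mem_Icc] at this ⊢ <;>
          constructor <;> linarith
      exact ⟨Finset.prod_nonneg fun i _ => (hfx i).1,
        Finset.prod_le_one (fun i _ => (hfx i).1) fun i _ => (hfx i).2⟩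
  simp only [hword, ← Finset.mul_sum]
  rw [← integral_finsetSum _ fun u _ => hint u]
  simp only [sum_prod_ite_of_apply_eq_true]
  rw [Nat.factorial_succ, Nat.cast_mul, mul_assoc,
    setIntegral_orderedTuples_last hf (fun t ht => (hf1 t ht).1)]
  simp

section Moments

variable {a b : ℝ}

theorem setIntegral_mul_eq_zero_of_moments {f : ℝ → ℝ} (hf : IntegrableOn f (Icc a b))
    (hmom : ∀ n : ℕ, ∫ t in Icc a b, f t * t ^ n = 0) {c : ℝ → ℝ}
    (hc : ContinuousOn c (Icc a b)) :
    ∫ t in Icc a b, f t * c t = 0 := by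
  have hint {c : ℝ → ℝ} (hc : ContinuousOn c (Icc a b)) :
      IntegrableOn (fun t => f t * c t) (Icc a b) :=
    hf.mul_continuousOn hc isCompact_Icc
  have hpoly (P : Polynomial ℝ) : ∫ t in Icc a b, f t * P.eval t = 0 := by
    simp only [Polynomial.eval_eq_sum_range, Finset.mul_sum, mul_left_comm (f _)]
    rw [integral_finsetSum _ fun i _ => (hint (continuous_pow i).continuousOn).const_mul _]
    simp [integral_const_mul, hmom]
  refine abs_nonpos_iff.1 (le_of_forall_pos_le_add fun ε hε => ?_)
  set I := ∫ t in Icc a b, ‖f t‖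
  have hI : 0 ≤ I := integral_nonneg fun _ => norm_nonneg _
  obtain ⟨P, hP⟩ := exists_polynomial_near_of_continuousOn a b c hc (ε / (I + 1)) (by positivity)
  have hcP : ∫ t in Icc a b, f t * c t = ∫ t in Icc a b, f t * (c t - P.eval t) := by
    simp only [mul_sub]
    rw [integral_sub (hint hc) (hint P.continuous.continuousOn), hpoly, sub_zero]
  calc |∫ t in Icc a b, f t * c t|
      = ‖∫ t in Icc a b, f t * (c t - P.eval t)‖ := by rw [hcP, Real.norm_eq_abs]
    _ ≤ ∫ t in Icc a b, ‖f t‖ * (ε / (I + 1)) := by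
        refine norm_integral_le_of_norm_le (hf.norm.mul_const _) ?_
        filter_upwards [ae_restrict_mem measurableSet_Icc] with t ht
        rw [norm_mul, Real.norm_eq_abs (c t - _), abs_sub_comm]
        gcongr
        exact (hP t ht).le
    _ = I * (ε / (I + 1)) := integral_mul_const _ _
    _ ≤ 0 + ε := by
        rw [zero_add, mul_div_assoc', div_le_iff₀ (by positivity)]
        nlinarith

theorem ae_eq_zero_of_moments {f : ℝ → ℝ} (hf : IntegrableOn f (Icc a b))
    (hmom : ∀ n : ℕ, ∫ t in Icc a b, f t * t ^ n = 0) :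
    ∀ᵐ t ∂volume.restrict (Icc a b), f t = 0 :=
  ae_eq_zero_of_integral_contDiff_smul_eq_zero (Integrable.locallyIntegrable hf) fun c hc _ => by
    simpa only [smul_eq_mul, mul_comm (c _)] using
      setIntegral_mul_eq_zero_of_moments hf hmom hc.continuous.continuousOn

theorem ae_eq_of_moments_eq {f g : ℝ → ℝ} (hf : IntegrableOn f (Icc a b))
    (hg : IntegrableOn g (Icc a b))
    (h : ∀ n : ℕ, ∫ t in Icc a b, f t * t ^ n = ∫ t in Icc a b, g t * t ^ n) :
    f =ᵐ[volume.restrict (Icc a b)] g := by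
  refine (ae_eq_zero_of_moments (hf.sub hg) fun n => ?_).mono fun t ht => sub_eq_zero.1 ht
  have hpow : ContinuousOn (· ^ n : ℝ → ℝ) (Icc a b) := (continuous_pow n).continuousOn
  simp only [Pi.sub_apply, sub_mul]
  rw [integral_sub (hf.mul_continuousOn hpow isCompact_Icc) (hg.mul_continuousOn hpow
    isCompact_Icc), h n, sub_self]

end Moments

theorem stmt2 (f g : ℝ → ℝ) (hf : Measurable f) (hg : Measurable g)
    (hf1 : ∀ x ∈ Set.Icc (0:ℝ) 1, f x ∈ Set.Icc (0:ℝ) 1)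
    (hg1 : ∀ x ∈ Set.Icc (0:ℝ) 1, g x ∈ Set.Icc (0:ℝ) 1)
    (h : ∀ (ℓ : ℕ) (u : Fin ℓ → Bool), wordDensity u f = wordDensity u g) :
    ∀ᵐ x ∂(volume.restrict (Set.Icc (0:ℝ) 1)), f x = g x := by
  have hvol : volume (Icc (0 : ℝ) 1) ≠ ∞ := by simp
  refine ae_eq_of_moments_eq
    (integrableOn_of_forall_mem_Icc_zero_one measurableSet_Icc hvol hf.aestronglyMeasurable hf1)
    (integrableOn_of_forall_mem_Icc_zero_one measurableSet_Icc hvol hg.aestronglyMeasurable hg1)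
    fun n => mul_left_cancel₀ n.cast_add_one_ne_zero ?_
  rw [← sum_wordDensity_of_last_eq_true hf hf1, ← sum_wordDensity_of_last_eq_true hg hg1]
  exact Finset.sum_congr rfl fun u _ => h _ u
end

section
/- Let f, g : [0,1] → [0,1] be Lebesgue measurable and u ∈ {0,1}^ℓ a binary word of length ℓ. Then |t(u,f) − t(u,g)| ≤ ℓ² · d_□(f,g). -/
open MeasureTheory Set

/-!
Write `S(φ, b) = ∫_{b < y₁ < ⋯ < yₙ ≤ 1} ∏ φᵢ(yᵢ) dy`, so that `t(u,f) = ℓ! S(f^u, 0)`. Fubini gives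
the recursion `S(φ, b) = ∫_b^1 φ₁(t) S(φ', t) dt` (with `φ'` the tail of `φ`) and the bound
`0 ≤ S(φ, b) ≤ (1-b)ⁿ/n!`. The difference `S(φ, b) - S(ψ, b)` splits into
`∫_b^1 φ₁ (S(φ', ·) - S(ψ', ·))`, handled by induction, and `∫_b^1 (φ₁ - ψ₁) S(ψ', ·)`. In the
latter, writing `S(ψ', t) = ∫_t^1 β` and swapping the two integrals gives
`∫_b^1 (∫_b^s (φ₁ - ψ₁)) β(s) ds`, whose inner integral is bounded by the interval norm `K`. By
induction `|S(φ, 0) - S(ψ, 0)| ≤ n K / (n-1)!`, and multiplying by `n!` gives `n² K`.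
-/

theorem setIntegral_mul_setIntegral_Ioc_swap {δ β : ℝ → ℝ} {a b : ℝ}
    (hδ : IntegrableOn δ (Ioc a b)) (hβ : IntegrableOn β (Ioc a b)) :
    ∫ t in Ioc a b, δ t * ∫ s in Ioc t b, β s = ∫ s in Ioc a b, (∫ t in Ioc a s, δ t) * β s := by
  set μ := volume.restrict (Ioc a b)
  set F := {p : ℝ × ℝ | p.1 ≤ p.2}.indicator fun p => δ p.1 * β p.2
  have hF : Integrable F (μ.prod μ) :=
    (hδ.mul_prod hβ).indicator (measurableSet_le measurable_fst measurable_snd)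
  convert integral_integral_swap (f := fun t s => F (t, s)) hF using 1
  · refine setIntegral_congr_fun measurableSet_Ioc fun t ht => ?_
    have hsec : Ioc a b ∩ Ici t = Icc t b := by
      ext s; simp only [mem_inter_iff, mem_Ioc, mem_Ici, mem_Icc]
      constructor
      · rintro ⟨⟨-, hs⟩, hts⟩; exact ⟨hts, hs⟩
      · rintro ⟨hts, hs⟩; exact ⟨⟨ht.1.trans_le hts, hs⟩, hts⟩
    rw [← integral_Icc_eq_integral_Ioc, ← hsec, ← setIntegral_indicator measurableSet_Ici,
      ← integral_const_mul]
    congr 1; funext s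
    show _ = F (t, s)
    simp only [F, indicator, mem_Ici, mem_ofPred_eq]
    split_ifs <;> simp
  · refine setIntegral_congr_fun measurableSet_Ioc fun s hs => ?_
    have hsec : Ioc a b ∩ Iic s = Ioc a s := by rw [Ioc_inter_Iic, inf_of_le_right hs.2]
    rw [← hsec, ← setIntegral_indicator measurableSet_Iic, ← integral_mul_const]
    congr 1; funext t
    show _ = F (t, s)
    simp only [F, indicator, mem_Iic, mem_ofPred_eq]
    split_ifs <;> simp

def simplex (n : ℕ) (b : ℝ) : Set (Fin n → ℝ) :=
  {y | (∀ i, y i ∈ Ioc b 1) ∧ StrictMono y}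

theorem measurableSet_setOf_strictMono (ι : Type*) [Countable ι] [Preorder ι] :
    MeasurableSet {y : ι → ℝ | StrictMono y} := by
  simp only [StrictMono, ofPred_forall]
  exact .iInter fun i => .iInter fun j => .iInter fun _ =>
    measurableSet_lt (measurable_pi_apply i) (measurable_pi_apply j)

theorem measurableSet_simplex_graph (n : ℕ) :
    MeasurableSet {p : ℝ × (Fin n → ℝ) | p.2 ∈ simplex n p.1} := by
  have hcoord (i : Fin n) : Measurable fun p : ℝ × (Fin n → ℝ) => p.2 i :=
    (measurable_pi_apply i).comp measurable_snd
  have hset : {p : ℝ × (Fin n → ℝ) | p.2 ∈ simplex n p.1} =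
      (⋂ i, {p | p.1 < p.2 i} ∩ {p | p.2 i ≤ 1}) ∩ Prod.snd ⁻¹' {y | StrictMono y} := by
    ext p; simp [simplex, forall_and]
  rw [hset]
  exact .inter (.iInter fun i => .inter (measurableSet_lt measurable_fst (hcoord i))
    (measurableSet_le (hcoord i) measurable_const))
    (measurable_snd (measurableSet_setOf_strictMono (Fin n)))

theorem measurableSet_simplex (n : ℕ) (b : ℝ) : MeasurableSet (simplex n b) :=
  measurable_prodMk_left (measurableSet_simplex_graph n)

theorem simplex_zero (b : ℝ) : simplex 0 b = univ :=
  eq_univ_of_forall fun _ => ⟨finZeroElim, fun i => i.elim0⟩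

theorem simplex_succ (n : ℕ) (b : ℝ) :
    simplex (n + 1) b = {y : Fin (n + 1) → ℝ | y 0 ∈ Ioc b 1 ∧ Fin.tail y ∈ simplex n (y 0)} := by
  ext y
  constructor
  · rintro ⟨hy, hmono⟩
    exact ⟨hy 0, fun j => ⟨hmono (Fin.succ_pos j), (hy j.succ).2⟩,
      hmono.comp (Fin.strictMono_succ)⟩
  · rintro ⟨h0, htail, hmono⟩
    refine ⟨Fin.cases h0 fun j => ⟨h0.1.trans (htail j).1, (htail j).2⟩, ?_⟩
    rw [← Fin.cons_self_tail y]
    exact Fin.strictMono_cons.2 ⟨fun j => (htail j).1, hmono⟩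

theorem closedSimplex_ae_eq_simplex (n : ℕ) :
    {y : Fin n → ℝ | (∀ i, y i ∈ Icc 0 1) ∧ StrictMono y} =ᵐ[volume] simplex n 0 := by
  refine ae_eq_set.2 ⟨measure_mono_null (t := ⋃ i, {y | y i = 0}) ?_ ?_, ?_⟩
  · rintro y ⟨⟨hy, hmono⟩, hys⟩
    by_contra! h
    simp only [mem_iUnion, mem_ofPred_eq, not_exists] at h
    exact hys ⟨fun i => ⟨(hy i).1.lt_of_ne' (h i), (hy i).2⟩, hmono⟩
  · exact measure_iUnion_null fun i => by rw [volume_pi]; exact Measure.pi_hyperplane _ i 0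
  · have hsub : simplex n 0 ⊆ {y : Fin n → ℝ | (∀ i, y i ∈ Icc 0 1) ∧ StrictMono y} :=
      fun y hy => ⟨fun i => Ioc_subset_Icc_self (hy.1 i), hy.2⟩
    rw [sdiff_eq_empty.2 hsub, measure_empty]

noncomputable def simplexIntegral {n : ℕ} (φ : Fin n → ℝ → ℝ) (b : ℝ) : ℝ :=
  ∫ y in simplex n b, ∏ i, φ i (y i)

theorem simplexIntegral_fin_zero (φ : Fin 0 → ℝ → ℝ) (b : ℝ) : simplexIntegral φ b = 1 := by
  simp [simplexIntegral, simplex_zero, measureReal_def, volume_pi]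

theorem measurable_simplexIntegral {n : ℕ} {φ : Fin n → ℝ → ℝ} (hφ : ∀ i, Measurable (φ i)) :
    Measurable (simplexIntegral φ) := by
  set G := {p : ℝ × (Fin n → ℝ) | p.2 ∈ simplex n p.1}.indicator fun p => ∏ i, φ i (p.2 i)
  have hG : Measurable G := (Finset.measurable_prod _ fun i _ =>
    (hφ i).comp ((measurable_pi_apply i).comp measurable_snd)).indicator
      (measurableSet_simplex_graph n)
  convert (hG.stronglyMeasurable.integral_prod_right' (ν := volume)).measurable using 2 with b
  rw [simplexIntegral, ← integral_indicator (measurableSet_simplex n b)]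
  rfl

theorem prod_mem_Icc_of_mapsTo {n : ℕ} {φ : Fin n → ℝ → ℝ}
    (hφ01 : ∀ i, MapsTo (φ i) (Icc 0 1) (Icc 0 1)) {y : Fin n → ℝ} (hy : ∀ i, y i ∈ Icc 0 1) :
    ∏ i, φ i (y i) ∈ Icc (0 : ℝ) 1 :=
  ⟨Finset.prod_nonneg fun i _ => (hφ01 i (hy i)).1,
    Finset.prod_le_one (fun i _ => (hφ01 i (hy i)).1) fun i _ => (hφ01 i (hy i)).2⟩

theorem setIntegral_cons_simplex {n : ℕ} {φ : Fin (n + 1) → ℝ → ℝ}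
    (hφ : ∀ i, Measurable (φ i)) (hφ01 : ∀ i, MapsTo (φ i) (Icc 0 1) (Icc 0 1))
    {A : Set ℝ} (hA : MeasurableSet A) (hA01 : A ⊆ Icc 0 1) :
    ∫ y in {y : Fin (n + 1) → ℝ | y 0 ∈ A ∧ Fin.tail y ∈ simplex n (y 0)}, ∏ i, φ i (y i) =
      ∫ t in A, φ 0 t * simplexIntegral (Fin.tail φ) t := by
  set e := MeasurableEquiv.piFinSuccAbove (fun _ : Fin (n + 1) => ℝ) 0
  set s := {p : ℝ × (Fin n → ℝ) | p.1 ∈ A ∧ p.2 ∈ simplex n p.1}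
  set G : ℝ × (Fin n → ℝ) → ℝ := fun p => φ 0 p.1 * ∏ j, φ j.succ (p.2 j)
  have hs : MeasurableSet s := (measurable_fst hA).inter (measurableSet_simplex_graph n)
  have hG : IntegrableOn G s := by
    have hsub : s ⊆ Icc 0 1 ×ˢ univ.pi fun _ => Icc 0 1 := fun p hp =>
      ⟨hA01 hp.1, fun j _ => ⟨(hA01 hp.1).1.trans (hp.2.1 j).1.le, (hp.2.1 j).2⟩⟩
    have hmeas : Measurable G := ((hφ 0).comp measurable_fst).mul
      (Finset.measurable_prod _ fun j _ =>
        (hφ j.succ).comp ((measurable_pi_apply j).comp measurable_snd))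
    refine Measure.integrableOn_of_bounded (M := 1) ((measure_mono hsub).trans_lt
      (isCompact_Icc.prod (isCompact_univ_pi fun _ => isCompact_Icc)).measure_lt_top).ne
      hmeas.aestronglyMeasurable ((ae_restrict_iff' hs).2 (.of_forall fun p hp => ?_))
    have h0 := hφ01 0 (hsub hp).1
    have htail := prod_mem_Icc_of_mapsTo (fun j => hφ01 j.succ) fun j => (hsub hp).2 j trivial
    rw [Real.norm_eq_abs, abs_of_nonneg (mul_nonneg h0.1 htail.1)]
    exact mul_le_one₀ h0.2 htail.1 htail.2
  calc ∫ y in e ⁻¹' s, ∏ i, φ i (y i)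
      = ∫ y in e ⁻¹' s, G (e y) :=
        setIntegral_congr_fun (e.measurable hs) fun y _ => Fin.prod_univ_succ _
    _ = ∫ p in s, G p :=
        (volume_preserving_piFinSuccAbove _ 0).setIntegral_preimage_emb e.measurableEmbedding G s
    _ = ∫ t, ∫ z, s.indicator G (t, z) := by
        rw [← integral_indicator hs, Measure.volume_eq_prod,
          integral_prod _ ((integrable_indicator_iff hs).2 hG)]
    _ = ∫ t, A.indicator (fun t => φ 0 t * simplexIntegral (Fin.tail φ) t) t := by
        congr 1; funext t
        by_cases ht : t ∈ A
        · rw [indicator_of_mem ht, simplexIntegral, ← integral_const_mul,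
            ← integral_indicator (measurableSet_simplex n t)]
          congr 1; funext z
          by_cases hz : z ∈ simplex n t
          · rw [indicator_of_mem (show (t, z) ∈ s from ⟨ht, hz⟩), indicator_of_mem hz]; rfl
          · rw [indicator_of_notMem (fun h => hz h.2), indicator_of_notMem hz]
        · simp [indicator, s, ht]
    _ = ∫ t in A, φ 0 t * simplexIntegral (Fin.tail φ) t := integral_indicator hA

theorem integral_Ioc_one_sub_pow_div_factorial (m : ℕ) {b : ℝ} (hb : b ≤ 1) :
    ∫ t in Ioc b 1, (1 - t) ^ m / m.factorial = (1 - b) ^ (m + 1) / (m + 1).factorial := by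
  rw [← intervalIntegral.integral_of_le hb, intervalIntegral.integral_div,
    intervalIntegral.integral_comp_sub_left (fun u => u ^ m) 1, integral_pow, Nat.factorial_succ]
  push_cast
  field_simp
  ring

theorem integrableOn_Ioc_of_abs_le {w : ℝ → ℝ} (hw : Measurable w) {a b C : ℝ}
    (hC : ∀ t ∈ Ioc a b, |w t| ≤ C) : IntegrableOn w (Ioc a b) :=
  Measure.integrableOn_of_bounded measure_Ioc_lt_top.ne hw.aestronglyMeasurable
    ((ae_restrict_iff' measurableSet_Ioc).2 (.of_forall hC))

theorem simplexIntegral_succ {n : ℕ} {φ : Fin (n + 1) → ℝ → ℝ} (hφ : ∀ i, Measurable (φ i))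
    (hφ01 : ∀ i, MapsTo (φ i) (Icc 0 1) (Icc 0 1)) {b : ℝ} (hb : 0 ≤ b) :
    simplexIntegral φ b = ∫ t in Ioc b 1, φ 0 t * simplexIntegral (Fin.tail φ) t := by
  rw [simplexIntegral, simplex_succ]
  exact setIntegral_cons_simplex hφ hφ01 measurableSet_Ioc fun t ht => ⟨hb.trans ht.1.le, ht.2⟩

section UnitFamily

variable {n : ℕ} {φ : Fin n → ℝ → ℝ}

theorem simplexIntegral_nonneg (hφ01 : ∀ i, MapsTo (φ i) (Icc 0 1) (Icc 0 1)) {b : ℝ}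
    (hb : 0 ≤ b) : 0 ≤ simplexIntegral φ b :=
  setIntegral_nonneg (measurableSet_simplex n b) fun _ hy =>
    (prod_mem_Icc_of_mapsTo hφ01 fun i => ⟨hb.trans (hy.1 i).1.le, (hy.1 i).2⟩).1

theorem simplexIntegral_le (hφ : ∀ i, Measurable (φ i))
    (hφ01 : ∀ i, MapsTo (φ i) (Icc 0 1) (Icc 0 1)) {b : ℝ} (hb0 : 0 ≤ b) (hb1 : b ≤ 1) :
    simplexIntegral φ b ≤ (1 - b) ^ n / n.factorial := by
  induction n generalizing b with
  | zero => simp [simplexIntegral_fin_zero]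
  | succ m ih =>
    rw [simplexIntegral_succ hφ hφ01 hb0, ← integral_Ioc_one_sub_pow_div_factorial m hb1]
    have hmaj : IntegrableOn (fun t : ℝ => (1 - t) ^ m / m.factorial) (Ioc b 1) :=
      (by fun_prop : Continuous fun t : ℝ => (1 - t) ^ m / m.factorial).integrableOn_Ioc
    have hbound : ∀ t ∈ Ioc b 1, φ 0 t * simplexIntegral (Fin.tail φ) t ∈
        Icc 0 ((1 - t) ^ m / m.factorial) := fun t ht => by
      have ht0 : 0 ≤ t := hb0.trans ht.1.le
      have hφt := hφ01 0 ⟨ht0, ht.2⟩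
      have hS := simplexIntegral_nonneg (fun j => hφ01 j.succ) ht0
      exact ⟨mul_nonneg hφt.1 hS, (mul_le_of_le_one_left hS hφt.2).trans
        (ih (fun j => hφ j.succ) (fun j => hφ01 j.succ) ht0 ht.2)⟩
    exact integral_mono_of_nonneg
      ((ae_restrict_iff' measurableSet_Ioc).2 (.of_forall fun t ht => (hbound t ht).1)) hmaj
      ((ae_restrict_iff' measurableSet_Ioc).2 (.of_forall fun t ht => (hbound t ht).2))

theorem simplexIntegral_mem_Icc (hφ : ∀ i, Measurable (φ i))
    (hφ01 : ∀ i, MapsTo (φ i) (Icc 0 1) (Icc 0 1)) {b : ℝ} (hb : b ∈ Icc 0 1) :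
    simplexIntegral φ b ∈ Icc 0 1 := by
  refine ⟨simplexIntegral_nonneg hφ01 hb.1, (simplexIntegral_le hφ hφ01 hb.1 hb.2).trans ?_⟩
  rw [div_le_one (by positivity)]
  exact (pow_le_one₀ (by linarith [hb.2]) (by linarith [hb.1])).trans
    (Nat.one_le_cast.2 n.factorial_pos)

theorem integrableOn_mul_simplexIntegral (hφ : ∀ i, Measurable (φ i))
    (hφ01 : ∀ i, MapsTo (φ i) (Icc 0 1) (Icc 0 1)) {θ : ℝ → ℝ} (hθ : Measurable θ)
    (hθ01 : MapsTo θ (Icc 0 1) (Icc 0 1)) {b : ℝ} (hb : 0 ≤ b) :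
    IntegrableOn (fun t => θ t * simplexIntegral φ t) (Ioc b 1) := by
  refine integrableOn_Ioc_of_abs_le (w := fun t => θ t * simplexIntegral φ t) (C := 1)
    (hθ.mul (measurable_simplexIntegral hφ)) fun t ht => ?_
  have ht' : t ∈ Icc 0 1 := ⟨hb.trans ht.1.le, ht.2⟩
  have hS := simplexIntegral_mem_Icc hφ hφ01 ht'
  have hθt := hθ01 ht'
  rw [abs_mul, abs_of_nonneg hS.1, abs_of_nonneg hθt.1]
  exact mul_le_one₀ hθt.2 hS.1 hS.2

end UnitFamily

def IntervalNormLE (h : ℝ → ℝ) (K : ℝ) : Prop :=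
  ∀ c d, 0 ≤ c → c ≤ d → d ≤ 1 → |∫ t in Ioc c d, h t| ≤ K

theorem IntervalNormLE.nonneg {h : ℝ → ℝ} {K : ℝ} (hK : IntervalNormLE h K) : 0 ≤ K :=
  (abs_nonneg _).trans (hK 0 0 le_rfl le_rfl zero_le_one)

theorem abs_setIntegral_mul_simplexIntegral_le {n : ℕ} {ψ : Fin n → ℝ → ℝ}
    (hψ : ∀ i, Measurable (ψ i)) (hψ01 : ∀ i, MapsTo (ψ i) (Icc 0 1) (Icc 0 1))
    {δ : ℝ → ℝ} {K : ℝ} (hδ : IntegrableOn δ (Ioc 0 1)) (hK : IntervalNormLE δ K)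
    {b : ℝ} (hb0 : 0 ≤ b) (hb1 : b ≤ 1) :
    |∫ t in Ioc b 1, δ t * simplexIntegral ψ t| ≤ K * (1 - b) ^ n / n.factorial := by
  cases n with
  | zero => simpa [simplexIntegral_fin_zero] using hK b 1 hb0 hb1 le_rfl
  | succ m =>
    set β := fun s => ψ 0 s * simplexIntegral (Fin.tail ψ) s
    have hβ : IntegrableOn β (Ioc b 1) :=
      integrableOn_mul_simplexIntegral (fun j => hψ j.succ) (fun j => hψ01 j.succ) (hψ 0)
        (hψ01 0) hb0
    have hrw : ∫ t in Ioc b 1, δ t * simplexIntegral ψ t =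
        ∫ t in Ioc b 1, δ t * ∫ s in Ioc t 1, β s :=
      setIntegral_congr_fun measurableSet_Ioc fun t ht => by
        rw [simplexIntegral_succ hψ hψ01 (hb0.trans ht.1.le)]
    rw [hrw, setIntegral_mul_setIntegral_Ioc_swap (hδ.mono_set (Ioc_subset_Ioc_left hb0)) hβ,
      mul_div_assoc, ← integral_Ioc_one_sub_pow_div_factorial m hb1, ← integral_const_mul]
    have hmaj : IntegrableOn (fun s : ℝ => K * ((1 - s) ^ m / m.factorial)) (Ioc b 1) :=
      (by fun_prop : Continuous fun s : ℝ => K * ((1 - s) ^ m / m.factorial)).integrableOn_Ioc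
    rw [← Real.norm_eq_abs]
    refine norm_integral_le_of_norm_le hmaj
      ((ae_restrict_iff' measurableSet_Ioc).2 (.of_forall fun s hs => ?_))
    have hs0 : 0 ≤ s := hb0.trans hs.1.le
    have hψs := hψ01 0 ⟨hs0, hs.2⟩
    have hSs := simplexIntegral_nonneg (fun j => hψ01 j.succ) hs0
    have hβs : β s ∈ Icc 0 ((1 - s) ^ m / m.factorial) :=
      ⟨mul_nonneg hψs.1 hSs, (mul_le_of_le_one_left hSs hψs.2).trans
        (simplexIntegral_le (fun j => hψ j.succ) (fun j => hψ01 j.succ) hs0 hs.2)⟩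
    rw [Real.norm_eq_abs, abs_mul, abs_of_nonneg hβs.1]
    exact mul_le_mul (hK b s hb0 hs.1.le hs.2) hβs.2 hβs.1 hK.nonneg

theorem simplexIntegral_sub_simplexIntegral {n : ℕ} {φ ψ : Fin (n + 1) → ℝ → ℝ}
    (hφ : ∀ i, Measurable (φ i)) (hφ01 : ∀ i, MapsTo (φ i) (Icc 0 1) (Icc 0 1))
    (hψ : ∀ i, Measurable (ψ i)) (hψ01 : ∀ i, MapsTo (ψ i) (Icc 0 1) (Icc 0 1))
    {b : ℝ} (hb : 0 ≤ b) :
    simplexIntegral φ b - simplexIntegral ψ b =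
      (∫ t in Ioc b 1,
        φ 0 t * (simplexIntegral (Fin.tail φ) t - simplexIntegral (Fin.tail ψ) t)) +
      ∫ t in Ioc b 1, (φ 0 t - ψ 0 t) * simplexIntegral (Fin.tail ψ) t := by
  have hφ' : ∀ j, Measurable (Fin.tail φ j) := fun j => hφ j.succ
  have hψ' : ∀ j, Measurable (Fin.tail ψ j) := fun j => hψ j.succ
  have hφ01' : ∀ j, MapsTo (Fin.tail φ j) (Icc 0 1) (Icc 0 1) := fun j => hφ01 j.succ
  have hψ01' : ∀ j, MapsTo (Fin.tail ψ j) (Icc 0 1) (Icc 0 1) := fun j => hψ01 j.succ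
  have hφφ := integrableOn_mul_simplexIntegral hφ' hφ01' (hφ 0) (hφ01 0) hb
  have hφψ := integrableOn_mul_simplexIntegral hψ' hψ01' (hφ 0) (hφ01 0) hb
  have hψψ := integrableOn_mul_simplexIntegral hψ' hψ01' (hψ 0) (hψ01 0) hb
  rw [simplexIntegral_succ hφ hφ01 hb, simplexIntegral_succ hψ hψ01 hb]
  simp_rw [mul_sub, sub_mul]
  rw [integral_sub hφφ hφψ, integral_sub hφψ hψψ]
  ring

theorem abs_simplexIntegral_sub_le {n : ℕ} {φ ψ : Fin (n + 1) → ℝ → ℝ}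
    (hφ : ∀ i, Measurable (φ i)) (hφ01 : ∀ i, MapsTo (φ i) (Icc 0 1) (Icc 0 1))
    (hψ : ∀ i, Measurable (ψ i)) (hψ01 : ∀ i, MapsTo (ψ i) (Icc 0 1) (Icc 0 1)) {K : ℝ}
    (hK : ∀ i, IntervalNormLE (fun t => φ i t - ψ i t) K) {b : ℝ} (hb0 : 0 ≤ b) (hb1 : b ≤ 1) :
    |simplexIntegral φ b - simplexIntegral ψ b| ≤ (n + 1) * K * (1 - b) ^ n / n.factorial := by
  have hφ' : ∀ j, Measurable (Fin.tail φ j) := fun j => hφ j.succ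
  have hψ' : ∀ j, Measurable (Fin.tail ψ j) := fun j => hψ j.succ
  have hφ01' : ∀ j, MapsTo (Fin.tail φ j) (Icc 0 1) (Icc 0 1) := fun j => hφ01 j.succ
  have hψ01' : ∀ j, MapsTo (Fin.tail ψ j) (Icc 0 1) (Icc 0 1) := fun j => hψ01 j.succ
  have hfirst : |∫ t in Ioc b 1, φ 0 t * (simplexIntegral (Fin.tail φ) t -
      simplexIntegral (Fin.tail ψ) t)| ≤ n * K * (1 - b) ^ n / n.factorial := by
    cases n with
    | zero => simp [simplexIntegral_fin_zero]
    | succ m =>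
      have hmaj :
          IntegrableOn (fun t : ℝ => (m + 1) * K * ((1 - t) ^ m / m.factorial)) (Ioc b 1) :=
        (by fun_prop : Continuous fun t : ℝ =>
          (m + 1) * K * ((1 - t) ^ m / m.factorial)).integrableOn_Ioc
      rw [← Real.norm_eq_abs]
      refine (norm_integral_le_of_norm_le hmaj ((ae_restrict_iff' measurableSet_Ioc).2
        (.of_forall fun t ht => ?_))).trans_eq ?_
      · have ht0 : 0 ≤ t := hb0.trans ht.1.le
        have hφt := hφ01 0 ⟨ht0, ht.2⟩
        rw [Real.norm_eq_abs, abs_mul, abs_of_nonneg hφt.1, mul_div_assoc']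
        exact (mul_le_of_le_one_left (abs_nonneg _) hφt.2).trans
          (abs_simplexIntegral_sub_le hφ' hφ01' hψ' hψ01' (fun j => hK j.succ) ht0 ht.2)
      · rw [integral_const_mul, integral_Ioc_one_sub_pow_div_factorial m hb1]
        push_cast
        ring
  have hδ : IntegrableOn (fun t => φ 0 t - ψ 0 t) (Ioc 0 1) :=
    integrableOn_Ioc_of_abs_le (w := fun t => φ 0 t - ψ 0 t) (C := 1) ((hφ 0).sub (hψ 0))
      fun t ht => by
        have h1 := hφ01 0 (Ioc_subset_Icc_self ht)
        have h2 := hψ01 0 (Ioc_subset_Icc_self ht)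
        exact abs_sub_le_of_nonneg_of_le h1.1 h1.2 h2.1 h2.2
  have hsecond := abs_setIntegral_mul_simplexIntegral_le hψ' hψ01' hδ (hK 0) hb0 hb1
  rw [simplexIntegral_sub_simplexIntegral hφ hφ01 hψ hψ01 hb0]
  calc _ ≤ _ := abs_add_le _ _
    _ ≤ n * K * (1 - b) ^ n / n.factorial + K * (1 - b) ^ n / n.factorial :=
        add_le_add hfirst hsecond
    _ = (n + 1) * K * (1 - b) ^ n / n.factorial := by ring

theorem intervalNormLE_cutDist {f g : ℝ → ℝ} (hf1 : MapsTo f (Icc 0 1) (Icc 0 1))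
    (hg1 : MapsTo g (Icc 0 1) (Icc 0 1)) : IntervalNormLE (fun t => f t - g t) (cutDist f g) := by
  intro c d hc hcd hd
  rw [← intervalIntegral.integral_of_le hcd]
  refine le_csSup ⟨1, ?_⟩ ⟨c, d, hc, hcd, hd, rfl⟩
  rintro _ ⟨a, b, ha, hab, hb, rfl⟩
  have hbound : ∀ x ∈ uIoc a b, ‖f x - g x‖ ≤ 1 := fun x hx => by
    rw [uIoc_of_le hab] at hx
    have h1 := hf1 ⟨ha.trans hx.1.le, hx.2.trans hb⟩
    have h2 := hg1 ⟨ha.trans hx.1.le, hx.2.trans hb⟩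
    exact abs_sub_le_of_nonneg_of_le h1.1 h1.2 h2.1 h2.2
  calc |∫ x in a..b, (f x - g x)| ≤ 1 * |b - a| :=
        intervalIntegral.norm_integral_le_of_norm_le_const hbound
    _ ≤ 1 := by rw [one_mul, abs_of_nonneg (by linarith)]; linarith

-- `letter c y` is `y^c` in the notation `f¹ = f`, `f⁰ = 1 - f`, with `true` playing `1`.
def letter (c : Bool) (y : ℝ) : ℝ := if c then y else 1 - y

theorem measurable_letter_comp (c : Bool) {f : ℝ → ℝ} (hf : Measurable f) :
    Measurable fun x => letter c (f x) := by
  cases c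
  · exact measurable_const.sub hf
  · exact hf

theorem mapsTo_letter_comp (c : Bool) {f : ℝ → ℝ} (hf1 : MapsTo f (Icc 0 1) (Icc 0 1)) :
    MapsTo (fun x => letter c (f x)) (Icc 0 1) (Icc 0 1) := by
  cases c
  · intro x hx
    have h := hf1 hx
    exact ⟨by simp [letter, h.2], by simp [letter, h.1]⟩
  · exact hf1

theorem IntervalNormLE.letter_comp (c : Bool) {f g : ℝ → ℝ} {K : ℝ}
    (h : IntervalNormLE (fun t => f t - g t) K) :
    IntervalNormLE (fun t => letter c (f t) - letter c (g t)) K := by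
  cases c
  · have hneg (t : ℝ) : letter false (f t) - letter false (g t) = -(f t - g t) := by
      simp only [letter, Bool.false_eq_true, if_false]
      ring
    intro a b ha hab hb
    simpa only [hneg, integral_neg, abs_neg] using h a b ha hab hb
  · exact h

theorem wordDensity_eq_simplexIntegral {ℓ : ℕ} (u : Fin ℓ → Bool) (f : ℝ → ℝ) :
    wordDensity u f = ℓ.factorial * simplexIntegral (fun i x => letter (u i) (f x)) 0 := by
  rw [wordDensity, simplexIntegral]
  congr 1
  exact setIntegral_congr_set (closedSimplex_ae_eq_simplex ℓ)

theorem stmt4 {ℓ : ℕ} (f g : ℝ → ℝ) (hf : Measurable f) (hg : Measurable g)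
    (hf1 : ∀ x ∈ Set.Icc (0:ℝ) 1, f x ∈ Set.Icc (0:ℝ) 1)
    (hg1 : ∀ x ∈ Set.Icc (0:ℝ) 1, g x ∈ Set.Icc (0:ℝ) 1)
    (u : Fin ℓ → Bool) :
    |wordDensity u f - wordDensity u g| ≤ (ℓ : ℝ) ^ 2 * cutDist f g := by
  have hK := (intervalNormLE_cutDist hf1 hg1).letter_comp
  rw [wordDensity_eq_simplexIntegral, wordDensity_eq_simplexIntegral, ← mul_sub, abs_mul,
    Nat.abs_cast]
  cases ℓ with
  | zero => simp [simplexIntegral_fin_zero]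
  | succ m =>
    have hdiff := abs_simplexIntegral_sub_le (fun i => measurable_letter_comp (u i) hf)
      (fun i => mapsTo_letter_comp (u i) hf1) (fun i => measurable_letter_comp (u i) hg)
      (fun i => mapsTo_letter_comp (u i) hg1) (fun i => hK (u i)) le_rfl zero_le_one
    calc ((m + 1).factorial : ℝ) * |_| ≤ (m + 1).factorial * ((m + 1) * cutDist f g *
          (1 - 0) ^ m / m.factorial) := by gcongr
      _ = ((m + 1 : ℕ) : ℝ) ^ 2 * cutDist f g := by
          rw [Nat.factorial_succ]
          push_cast
          field_simp
          ring
end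

section
/- Let k, r ≥ 1, let a = (a₁,…,a_k) ∈ [0,1]^k and let J = 𝟏_{[0,a₁]×⋯×[0,a_k]} : [0,1]^k → ℝ be the indicator of the box. If x ∈ [0,1]^k satisfies |x_i − a_i| > r^{−1/4} for all i ∈ [k], then |B_{r,J}(x) − J(x)| ≤ k r^{−1/2}. -/
/-!
Bernstein polynomials are products of univariate ones, and the indicator of a box is a product
of indicators of intervals, so `B_{r,J}(x)` is a product of `k` univariate Bernstein sums. The
product of numbers in `[-1, 1]` is `1`-Lipschitz in each factor, which reduces the claim to `k = 1`.
There the Bernstein weights at `x` are the law of `Bin(r, x)/r`, and only nodes `i/r` on the other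
side of `a` than `x`, hence at distance at least `|x - a|` from `x`, contribute to the error, so
Chebyshev's inequality bounds it by `x(1-x)/(r |x-a|²) ≤ r^{-1/2}`.
-/

/-- The `k`-variate Bernstein polynomial of `J : [0,1]^k → ℝ` of order `t`. -/
noncomputable def bernsteinPoly (k t : ℕ) (J : (Fin k → ℝ) → ℝ) (x : Fin k → ℝ) : ℝ :=
  ∑ i : Fin k → Fin (t + 1),
    J (fun j => ((i j : ℕ) : ℝ) / (t : ℝ)) *
      ∏ j, ((t.choose (i j) : ℝ) * x j ^ (i j : ℕ) * (1 - x j) ^ (t - (i j : ℕ)))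

open Finset

noncomputable def bernsteinSum (t : ℕ) (f : ℝ → ℝ) (x : ℝ) : ℝ :=
  ∑ i : Fin (t + 1), f ((i : ℕ) / t) * ((t.choose i : ℝ) * x ^ (i : ℕ) * (1 - x) ^ (t - (i : ℕ)))

theorem bernsteinPoly_pi (k t : ℕ) (f : Fin k → ℝ → ℝ) (x : Fin k → ℝ) :
    bernsteinPoly k t (fun y => ∏ j, f j (y j)) x = ∏ j, bernsteinSum t (f j) (x j) := by
  simp only [bernsteinPoly, bernsteinSum, ← prod_mul_distrib]
  rw [Fintype.prod_sum]

theorem norm_prod_sub_prod_le {ι R : Type*} [NormedCommRing R] [NormOneClass R] (s : Finset ι)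
    (f g : ι → R) (hf : ∀ i ∈ s, ‖f i‖ ≤ 1) (hg : ∀ i ∈ s, ‖g i‖ ≤ 1) :
    ‖∏ i ∈ s, f i - ∏ i ∈ s, g i‖ ≤ ∑ i ∈ s, ‖f i - g i‖ := by
  induction s using Finset.cons_induction with
  | empty => simp
  | cons a s ha ih =>
    simp only [forall_mem_cons] at hf hg
    rw [prod_cons, prod_cons, sum_cons]
    have hgs : ‖∏ i ∈ s, g i‖ ≤ 1 :=
      (Finset.norm_prod_le s g).trans (prod_le_one (fun _ _ => norm_nonneg _) hg.2)
    calc ‖f a * ∏ i ∈ s, f i - g a * ∏ i ∈ s, g i‖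
        = ‖f a * (∏ i ∈ s, f i - ∏ i ∈ s, g i) + (f a - g a) * ∏ i ∈ s, g i‖ := by ring_nf
      _ ≤ ‖f a‖ * ‖∏ i ∈ s, f i - ∏ i ∈ s, g i‖ + ‖f a - g a‖ * ‖∏ i ∈ s, g i‖ :=
        (norm_add_le _ _).trans (add_le_add (norm_mul_le _ _) (norm_mul_le _ _))
      _ ≤ 1 * ∑ i ∈ s, ‖f i - g i‖ + ‖f a - g a‖ * 1 := by
        gcongr
        exacts [hf.1, ih hf.2 hg.2]
      _ = ‖f a - g a‖ + ∑ i ∈ s, ‖f i - g i‖ := by ring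

section Univariate

variable {t : ℕ} {f : ℝ → ℝ} {x : ℝ}

theorem bernsteinSum_eq_sum_bernstein (hx : x ∈ Set.Icc (0 : ℝ) 1) :
    bernsteinSum t f x = ∑ i : Fin (t + 1), f (bernstein.z i) * bernstein t i ⟨x, hx⟩ := by
  simp [bernsteinSum, bernstein_apply, bernstein.z]

theorem abs_bernsteinSum_le {M : ℝ} (hx : x ∈ Set.Icc (0 : ℝ) 1)
    (hf : ∀ y ∈ Set.Icc (0 : ℝ) 1, |f y| ≤ M) : |bernsteinSum t f x| ≤ M := by
  rw [bernsteinSum_eq_sum_bernstein hx]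
  calc |∑ i : Fin (t + 1), f (bernstein.z i) * bernstein t i ⟨x, hx⟩|
      ≤ ∑ i : Fin (t + 1), M * bernstein t i ⟨x, hx⟩ := by
        refine (abs_sum_le_sum_abs _ _).trans (sum_le_sum fun i _ => ?_)
        rw [abs_mul, abs_of_nonneg bernstein_nonneg]
        exact mul_le_mul_of_nonneg_right (hf _ (bernstein.z i).2) bernstein_nonneg
    _ = M := by rw [← mul_sum, bernstein.probability, mul_one]

/-- Chebyshev's inequality for the binomial law, applied to `f(i/t) - f(x)`. -/
theorem abs_bernsteinSum_sub_le (ht : t ≠ 0) {M δ : ℝ} (hx : x ∈ Set.Icc (0 : ℝ) 1) (hδ : 0 < δ)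
    (hM : ∀ y ∈ Set.Icc (0 : ℝ) 1, |f y - f x| ≤ M)
    (hloc : ∀ y ∈ Set.Icc (0 : ℝ) 1, |x - y| < δ → f y = f x) :
    |bernsteinSum t f x - f x| ≤ M / δ ^ 2 * (x * (1 - x) / t) := by
  have hM0 : 0 ≤ M := (abs_nonneg _).trans (hM x hx)
  set b : Fin (t + 1) → ℝ := fun i => bernstein t i ⟨x, hx⟩
  have hterm (i : Fin (t + 1)) :
      |f (bernstein.z i) - f x| * b i ≤ M / δ ^ 2 * ((x - bernstein.z i) ^ 2 * b i) := by
    have hb : 0 ≤ b i := bernstein_nonneg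
    by_cases hnear : |x - bernstein.z i| < δ
    · rw [hloc _ (bernstein.z i).2 hnear, sub_self, abs_zero, zero_mul]
      positivity
    · have hfar : δ ^ 2 ≤ (x - bernstein.z i) ^ 2 := by
        rw [← sq_abs (x - _)]
        exact pow_le_pow_left₀ hδ.le (not_lt.mp hnear) 2
      have : M ≤ M / δ ^ 2 * (x - bernstein.z i) ^ 2 := by
        rw [div_mul_eq_mul_div, le_div_iff₀ (by positivity)]
        exact mul_le_mul_of_nonneg_left hfar hM0
      rw [← mul_assoc]
      exact mul_le_mul_of_nonneg_right ((hM _ (bernstein.z i).2).trans this) hb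
  calc |bernsteinSum t f x - f x|
      = |∑ i, (f (bernstein.z i) - f x) * b i| := by
        rw [bernsteinSum_eq_sum_bernstein hx]
        simp only [sub_mul, sum_sub_distrib, ← mul_sum, b, bernstein.probability, mul_one]
    _ ≤ ∑ i, |f (bernstein.z i) - f x| * b i := by
        refine (abs_sum_le_sum_abs _ _).trans_eq (sum_congr rfl fun i _ => ?_)
        rw [abs_mul, abs_of_nonneg (bernstein_nonneg : 0 ≤ b i)]
    _ ≤ M / δ ^ 2 * ∑ i, (x - bernstein.z i) ^ 2 * b i := by
        rw [mul_sum]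
        exact sum_le_sum fun i _ => hterm i
    _ = M / δ ^ 2 * (x * (1 - x) / t) := congrArg _ (bernstein.variance ht ⟨x, hx⟩)

theorem abs_bernsteinSum_indicator_sub_le (ht : t ≠ 0) {a : ℝ} (hx : x ∈ Set.Icc (0 : ℝ) 1)
    (hxa : x ≠ a) :
    |bernsteinSum t (fun y => if 0 ≤ y ∧ y ≤ a then 1 else 0) x -
        (if 0 ≤ x ∧ x ≤ a then 1 else 0)| ≤ 1 / (t * (x - a) ^ 2) := by
  have hδ : 0 < |x - a| := abs_pos.mpr (sub_ne_zero.mpr hxa)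
  refine (abs_bernsteinSum_sub_le ht (M := 1) hx hδ ?_ ?_).trans ?_
  · intro y _
    split_ifs <;> norm_num
  · intro y hy hxy
    have hsame : y ≤ a ↔ x ≤ a := by
      have hxy' := abs_lt.mp hxy
      rcases hxa.lt_or_gt with h | h
      · rw [abs_of_neg (sub_neg.mpr h)] at hxy'
        constructor <;> intro <;> linarith
      · rw [abs_of_pos (sub_pos.mpr h)] at hxy'
        constructor <;> intro <;> linarith
    simp only [hy.1, hx.1, true_and, hsame]
  · have hvar : x * (1 - x) ≤ 1 := by nlinarith [hx.1, hx.2]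
    rw [sq_abs, div_mul_div_comm, one_mul, mul_comm ((x - a) ^ 2)]
    exact div_le_div_of_nonneg_right hvar (by positivity)

end Univariate

theorem one_div_mul_sq_le_rpow {r d : ℝ} (hr : 0 < r) (hd : r ^ (-(1 : ℝ) / 4) < |d|) :
    1 / (r * d ^ 2) ≤ r ^ (-(1 : ℝ) / 2) := by
  have hq : 0 < r ^ (-(1 : ℝ) / 4) := Real.rpow_pos_of_pos hr _
  have hsq : r ^ (-(1 : ℝ) / 2) ≤ d ^ 2 :=
    calc r ^ (-(1 : ℝ) / 2) = r ^ (-(1 : ℝ) / 4) * r ^ (-(1 : ℝ) / 4) := by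
          rw [← Real.rpow_add hr]; norm_num
      _ ≤ |d| * |d| := mul_self_le_mul_self hq.le hd.le
      _ = d ^ 2 := by rw [← sq, sq_abs]
  have hinv : r * r ^ (-(1 : ℝ) / 2) * r ^ (-(1 : ℝ) / 2) = 1 := by
    rw [mul_assoc, ← Real.rpow_add hr]
    norm_num [Real.rpow_neg_one, hr.ne']
  calc 1 / (r * d ^ 2) ≤ 1 / (r * r ^ (-(1 : ℝ) / 2)) := by gcongr
    _ = r ^ (-(1 : ℝ) / 2) := by rw [div_eq_iff (by positivity)]; linarith

theorem stmt6_general (k r : ℕ) (hr : 1 ≤ r) (a x : Fin k → ℝ)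
    (hx : ∀ i, x i ∈ Set.Icc (0:ℝ) 1)
    (hfar : ∀ i, (r : ℝ) ^ (-(1:ℝ)/4) < |x i - a i|) :
    |bernsteinPoly k r (fun y => if ∀ i, 0 ≤ y i ∧ y i ≤ a i then (1:ℝ) else 0) x -
        (if ∀ i, 0 ≤ x i ∧ x i ≤ a i then (1:ℝ) else 0)|
      ≤ (k : ℝ) * (r : ℝ) ^ (-(1:ℝ)/2) := by
  set I : Fin k → ℝ → ℝ := fun i z => if 0 ≤ z ∧ z ≤ a i then 1 else 0
  have hbox (y : Fin k → ℝ) :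
      (if ∀ i, 0 ≤ y i ∧ y i ≤ a i then (1:ℝ) else 0) = ∏ i, I i (y i) := by
    simp only [I, Fintype.prod_boole]
    congr
  have hI (i : Fin k) (z : ℝ) : |I i z| ≤ 1 := by
    simp only [I]
    split_ifs <;> norm_num
  have hr0 : (0 : ℝ) < r := by exact_mod_cast hr
  have hxa (i : Fin k) : x i ≠ a i :=
    sub_ne_zero.mp (abs_pos.mp ((Real.rpow_pos_of_pos hr0 _).trans (hfar i)))
  rw [funext hbox, bernsteinPoly_pi, hbox x]
  calc |∏ i, bernsteinSum r (I i) (x i) - ∏ i, I i (x i)|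
      ≤ ∑ i, |bernsteinSum r (I i) (x i) - I i (x i)| :=
        norm_prod_sub_prod_le univ (fun i => bernsteinSum r (I i) (x i)) (fun i => I i (x i))
          (fun i _ => abs_bernsteinSum_le (hx i) fun z _ => hI i z)
          (fun i _ => hI i (x i))
    _ ≤ ∑ _i : Fin k, (r : ℝ) ^ (-(1:ℝ)/2) := sum_le_sum fun i _ =>
        (abs_bernsteinSum_indicator_sub_le (by omega) (hx i) (hxa i)).trans
          (one_div_mul_sq_le_rpow hr0 (hfar i))
    _ = k * (r : ℝ) ^ (-(1:ℝ)/2) := by simp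

theorem stmt6 (k r : ℕ) (hk : 1 ≤ k) (hr : 1 ≤ r) (a x : Fin k → ℝ)
    (ha : ∀ i, a i ∈ Set.Icc (0:ℝ) 1) (hx : ∀ i, x i ∈ Set.Icc (0:ℝ) 1)
    (hfar : ∀ i, (r : ℝ) ^ (-(1:ℝ)/4) < |x i - a i|) :
    |bernsteinPoly k r (fun y => if ∀ i, 0 ≤ y i ∧ y i ≤ a i then (1:ℝ) else 0) x -
        (if ∀ i, 0 ≤ x i ∧ x i ≤ a i then (1:ℝ) else 0)|
      ≤ (k : ℝ) * (r : ℝ) ^ (-(1:ℝ)/2) :=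
  stmt6_general k r hr a x hx hfar
end

section
/- If a sequence (f_n) of Lebesgue measurable functions f_n : [0,1] → [0,1] satisfies t(u, f_n) → t(u, f) for every finite binary word u, for some measurable f : [0,1] → [0,1], then d_□(f_n, f) → 0. -/
open MeasureTheory

/-!
Summing `t(u, f)` over all words `u = 1v` of length `m + 1` leaves `(m+1)! ∫ f(x₁)` over the
ordered simplex, and the smallest of `m + 1` ordered points has density `(m+1)(1-s)^m`. Hence
convergence of word densities gives `∫₀¹ (fₙ - f)(s) (1-s)^m ds → 0` for every `m`, i.e.
`∫₀¹ (fₙ - f) P → 0` for every polynomial `P`. As `|fₙ - f| ≤ 1`, Weierstrass approximation and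
the `L¹`-density of continuous functions upgrade this to `∫₀ᵗ (fₙ - f) → 0` for each `t`. These
primitives are `1`-Lipschitz, so the convergence is uniform on `[0,1]`, and
`d_□(fₙ, f) ≤ 2 sup_t |∫₀ᵗ (fₙ - f)|`.
-/

open Filter Set Topology Polynomial

def sortedTail (m : ℕ) (t : ℝ) : Set (Fin m → ℝ) :=
  {y | (∀ i, y i ∈ Ioc t 1) ∧ StrictMono y}

lemma volume_setOf_head_mem_tail_mem_sortedTail (m : ℕ) {E : Set ℝ} (hE : MeasurableSet E) :
    volume {x : Fin (m + 1) → ℝ | x 0 ∈ E ∧ Fin.tail x ∈ sortedTail m (x 0)} =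
      ∫⁻ s in E, volume (sortedTail m s) := by
  set B := {p : ℝ × (Fin m → ℝ) | p.1 ∈ E ∧ p.2 ∈ sortedTail m p.1}
  have hB : MeasurableSet B := by
    simp only [B, sortedTail, StrictMono, mem_ofPred_eq, mem_Ioc]
    measurability
  have hpre : {x : Fin (m + 1) → ℝ | x 0 ∈ E ∧ Fin.tail x ∈ sortedTail m (x 0)} =
      MeasurableEquiv.piFinSuccAbove (fun _ => ℝ) 0 ⁻¹' B := rfl
  rw [hpre, (volume_preserving_piFinSuccAbove (fun _ : Fin (m + 1) => ℝ) 0).measure_preimage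
    hB.nullMeasurableSet, Measure.volume_eq_prod, Measure.prod_apply hB,
    ← lintegral_indicator hE]
  congr 1 with s
  by_cases hs : s ∈ E <;> simp [B, hs, indicator]

lemma setOf_strictMono_eq_head_tail {m : ℕ} {I : Set ℝ} (hI : ∀ s ∈ I, Ioc s 1 ⊆ I)
    (hI1 : I ⊆ Iic 1) :
    {x : Fin (m + 1) → ℝ | (∀ i, x i ∈ I) ∧ StrictMono x} =
      {x : Fin (m + 1) → ℝ | x 0 ∈ I ∧ Fin.tail x ∈ sortedTail m (x 0)} := by
  ext x
  rw [← Fin.cons_self_tail x]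
  simp only [sortedTail, mem_ofPred_eq, Fin.strictMono_cons, Fin.forall_fin_succ, Fin.cons_zero,
    Fin.cons_succ, Fin.tail_cons, mem_Ioc]
  constructor
  · rintro ⟨⟨h0, hI'⟩, hlt, hmono⟩
    exact ⟨h0, fun j => ⟨hlt j, hI1 (hI' j)⟩, hmono⟩
  · rintro ⟨h0, htail, hmono⟩
    exact ⟨⟨h0, fun j => hI _ h0 (htail j)⟩, fun j => (htail j).1, hmono⟩

lemma volume_sortedTail (m : ℕ) {t : ℝ} (ht : t ≤ 1) :
    volume (sortedTail m t) = ENNReal.ofReal ((1 - t) ^ m / m.factorial) := by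
  induction m generalizing t with
  | zero => simp [sortedTail, Subsingleton.strictMono, volume_pi]
  | succ m ih =>
    have hI : ∀ s ∈ Ioc t 1, Ioc s 1 ⊆ Ioc t 1 := fun s hs => Ioc_subset_Ioc_left hs.1.le
    rw [sortedTail, setOf_strictMono_eq_head_tail hI Ioc_subset_Iic_self,
      volume_setOf_head_mem_tail_mem_sortedTail m measurableSet_Ioc,
      setLIntegral_congr_fun measurableSet_Ioc fun s hs => ih hs.2,
      ← ofReal_integral_eq_lintegral_ofReal, ← intervalIntegral.integral_of_le ht]
    · congr 1
      simp [intervalIntegral.integral_div, intervalIntegral.integral_comp_sub_left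
        (fun s => s ^ m), Nat.factorial_succ]
      field_simp
    · exact (by fun_prop : Continuous fun s : ℝ => (1 - s) ^ m / m.factorial).integrableOn_Ioc
    · refine (ae_restrict_iff' measurableSet_Ioc).2 (Eventually.of_forall fun s hs => ?_)
      have : 0 ≤ 1 - s := sub_nonneg.2 hs.2
      positivity

def orderSimplex (ℓ : ℕ) : Set (Fin ℓ → ℝ) :=
  {x | (∀ i, x i ∈ Icc (0:ℝ) 1) ∧ ∀ i j : Fin ℓ, i < j → x i < x j}

lemma measurableSet_orderSimplex (ℓ : ℕ) : MeasurableSet (orderSimplex ℓ) := by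
  simp only [orderSimplex]
  measurability

lemma orderSimplex_succ (m : ℕ) :
    orderSimplex (m + 1) =
      {x : Fin (m + 1) → ℝ | x 0 ∈ Icc 0 1 ∧ Fin.tail x ∈ sortedTail m (x 0)} :=
  setOf_strictMono_eq_head_tail (fun _ hs _ hx => ⟨hs.1.trans hx.1.le, hx.2⟩) Icc_subset_Iic_self

lemma map_eval_zero_volume_restrict_orderSimplex (m : ℕ) :
    (volume.restrict (orderSimplex (m + 1))).map (fun x => x 0) =
      (volume.restrict (Icc 0 1)).withDensity
        fun s => ENNReal.ofReal ((1 - s) ^ m / m.factorial) := by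
  ext E hE
  rw [Measure.map_apply (measurable_pi_apply 0) hE, Measure.restrict_apply
    (measurable_pi_apply 0 hE), withDensity_apply _ hE, Measure.restrict_restrict hE,
    orderSimplex_succ]
  calc _ = volume {x : Fin (m + 1) → ℝ | x 0 ∈ E ∩ Icc 0 1 ∧ Fin.tail x ∈ sortedTail m (x 0)} :=
        congrArg volume (ext fun x => by simp [and_assoc])
    _ = _ := volume_setOf_head_mem_tail_mem_sortedTail m (hE.inter measurableSet_Icc)
    _ = _ := setLIntegral_congr_fun (hE.inter measurableSet_Icc) fun s hs =>
        volume_sortedTail m hs.2.2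

lemma setIntegral_orderSimplex_eval_zero (m : ℕ) {F : ℝ → ℝ} (hF : Measurable F) :
    ∫ x in orderSimplex (m + 1), F (x 0) = ∫ s in Icc 0 1, F s * ((1 - s) ^ m / m.factorial) := by
  rw [← integral_map (measurable_pi_apply 0).aemeasurable hF.aestronglyMeasurable,
    map_eval_zero_volume_restrict_orderSimplex, integral_withDensity_eq_integral_toReal_smul
      (by fun_prop) (Eventually.of_forall fun _ => ENNReal.ofReal_lt_top)]
  refine setIntegral_congr_fun measurableSet_Icc fun s hs => ?_
  have : 0 ≤ 1 - s := sub_nonneg.2 hs.2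
  rw [ENNReal.toReal_ofReal (by positivity), smul_eq_mul, mul_comm]

lemma sum_prod_ite_one_sub {m : ℕ} (v : Fin m → ℝ) :
    ∑ u : Fin m → Bool, ∏ i, (if u i then v i else 1 - v i) = 1 := by
  rw [← Fintype.prod_sum fun i (b : Bool) => if b then v i else 1 - v i]
  simp

lemma ite_one_sub_mem_Icc {t : ℝ} (ht : t ∈ Icc (0:ℝ) 1) (b : Bool) :
    (if b then t else 1 - t) ∈ Icc (0:ℝ) 1 := by
  cases b
  · exact ⟨sub_nonneg.2 ht.2, sub_le_self _ ht.1⟩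
  · exact ht

lemma integrableOn_orderSimplex_prod {ℓ : ℕ} (u : Fin ℓ → Bool) {F : ℝ → ℝ} (hF : Measurable F)
    (hF1 : MapsTo F (Icc 0 1) (Icc 0 1)) :
    IntegrableOn (fun x => ∏ i, (if u i then F (x i) else 1 - F (x i))) (orderSimplex ℓ) := by
  have hfinite : volume (orderSimplex ℓ) ≠ ⊤ :=
    measure_ne_top_of_subset (fun x hx => mem_univ_pi.2 hx.1)
      (isCompact_univ_pi fun _ => isCompact_Icc).measure_lt_top.ne
  have hmeas : Measurable fun x : Fin ℓ → ℝ => ∏ i, (if u i then F (x i) else 1 - F (x i)) :=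
    Finset.measurable_prod _ fun i _ => by split <;> fun_prop
  refine Measure.integrableOn_of_bounded hfinite hmeas.aestronglyMeasurable (M := 1) ?_
  refine (ae_restrict_iff' (measurableSet_orderSimplex ℓ)).2
    (Eventually.of_forall fun x hx => ?_)
  have hmem i := ite_one_sub_mem_Icc (hF1 (hx.1 i)) (u i)
  rw [Real.norm_of_nonneg (Finset.prod_nonneg fun i _ => (hmem i).1)]
  exact Finset.prod_le_one (fun i _ => (hmem i).1) (fun i _ => (hmem i).2)

lemma wordDensity_eq {ℓ : ℕ} (u : Fin ℓ → Bool) (F : ℝ → ℝ) :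
    wordDensity u F =
      ℓ.factorial * ∫ x in orderSimplex ℓ, ∏ i, (if u i then F (x i) else 1 - F (x i)) :=
  rfl

lemma sum_wordDensity_cons_true (m : ℕ) {F : ℝ → ℝ} (hF : Measurable F)
    (hF1 : MapsTo F (Icc 0 1) (Icc 0 1)) :
    ∑ u : Fin m → Bool, wordDensity (Fin.cons true u) F =
      (m + 1) * ∫ s in Icc 0 1, F s * (1 - s) ^ m := by
  have hsum : ∀ x : Fin (m + 1) → ℝ,
      ∑ u : Fin m → Bool, ∏ i, (if (Fin.cons true u : Fin (m + 1) → Bool) i then F (x i)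
        else 1 - F (x i)) = F (x 0) := fun x => by
    simp only [Fin.prod_univ_succ, Fin.cons_zero, Fin.cons_succ, if_true, ← Finset.mul_sum,
      sum_prod_ite_one_sub, mul_one]
  simp only [wordDensity_eq]
  rw [← Finset.mul_sum, ← integral_finsetSum _ fun u _ =>
    integrableOn_orderSimplex_prod _ hF hF1]
  simp only [hsum]
  rw [setIntegral_orderSimplex_eval_zero m hF]
  simp only [← mul_div_assoc, integral_div, Nat.factorial_succ]
  push_cast
  field_simp

theorem tendsto_integral_mul_of_forall_approx {α : Type*} [MeasurableSpace α] {μ : Measure α}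
    {H : ℕ → α → ℝ} {C : ℝ} (hHm : ∀ n, AEStronglyMeasurable (H n) μ)
    (hH : ∀ n, ∀ᵐ x ∂μ, ‖H n x‖ ≤ C) {φ : α → ℝ} (hφ : Integrable φ μ)
    (happrox : ∀ δ > 0, ∃ ψ : α → ℝ, Integrable ψ μ ∧ ∫ x, ‖φ x - ψ x‖ ∂μ ≤ δ ∧
      Tendsto (fun n => ∫ x, H n x * ψ x ∂μ) atTop (𝓝 0)) :
    Tendsto (fun n => ∫ x, H n x * φ x ∂μ) atTop (𝓝 0) := by
  rw [Metric.tendsto_atTop]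
  intro ε hε
  obtain ⟨ψ, hψ, hφψ, hlim⟩ := happrox (ε / (2 * (|C| + 1))) (by positivity)
  obtain ⟨N, hN⟩ := Metric.tendsto_atTop.1 hlim (ε / 2) (by positivity)
  refine ⟨N, fun n hn => ?_⟩
  have hsplit : ∫ x, H n x * φ x ∂μ = ∫ x, H n x * (φ x - ψ x) ∂μ + ∫ x, H n x * ψ x ∂μ := by
    have h₁ : Integrable (fun x => H n x * (φ x - ψ x)) μ := (hφ.sub hψ).bdd_mul (hHm n) (hH n)
    have h₂ : Integrable (fun x => H n x * ψ x) μ := hψ.bdd_mul (hHm n) (hH n)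
    rw [← integral_add h₁ h₂]
    simp only [mul_sub, sub_add_cancel]
  have hdiff : ‖∫ x, H n x * (φ x - ψ x) ∂μ‖ ≤ |C| * ∫ x, ‖φ x - ψ x‖ ∂μ := by
    rw [← integral_const_mul]
    refine norm_integral_le_of_norm_le ((hφ.sub hψ).norm.const_mul _) ?_
    filter_upwards [hH n] with x hx
    rw [norm_mul]
    exact mul_le_mul_of_nonneg_right (hx.trans (le_abs_self C)) (norm_nonneg _)
  have hsmall : |C| * ∫ x, ‖φ x - ψ x‖ ∂μ < ε / 2 := by
    calc |C| * ∫ x, ‖φ x - ψ x‖ ∂μ ≤ |C| * (ε / (2 * (|C| + 1))) :=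
          mul_le_mul_of_nonneg_left hφψ (abs_nonneg C)
      _ < ε / 2 := by
          rw [mul_div_assoc', div_lt_div_iff₀ (by positivity) (by positivity)]
          nlinarith [abs_nonneg C]
  rw [dist_zero_right, hsplit]
  have := hN n hn
  rw [dist_zero_right] at this
  linarith [norm_add_le (∫ x, H n x * (φ x - ψ x) ∂μ) (∫ x, H n x * ψ x ∂μ)]

section UnitInterval

variable {H : ℕ → ℝ → ℝ} (hHint : ∀ n, IntegrableOn (H n) (Icc 0 1))
include hHint

lemma tendsto_setIntegral_mul_eval
    (hmom : ∀ m : ℕ, Tendsto (fun n => ∫ x in Icc 0 1, H n x * (1 - x) ^ m) atTop (𝓝 0))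
    (P : ℝ[X]) : Tendsto (fun n => ∫ x in Icc 0 1, H n x * P.eval x) atTop (𝓝 0) := by
  set Q := P.comp (1 - X)
  have hPQ n x : H n x * P.eval x =
      ∑ i ∈ Finset.range (Q.natDegree + 1), Q.coeff i * (H n x * (1 - x) ^ i) := by
    simp_rw [mul_left_comm _ (H n x), ← Finset.mul_sum, ← eval_eq_sum_range]
    simp [Q]
  have hexpand n : ∫ x in Icc 0 1, H n x * P.eval x =
      ∑ i ∈ Finset.range (Q.natDegree + 1), Q.coeff i * ∫ x in Icc 0 1, H n x * (1 - x) ^ i := by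
    simp_rw [hPQ, ← integral_const_mul]
    exact integral_finsetSum _ fun i _ =>
      ((hHint n).mul_continuousOn (by fun_prop) isCompact_Icc).const_mul (Q.coeff i)
  simp_rw [hexpand]
  simpa using tendsto_finsetSum _ fun i _ => (hmom i).const_mul (Q.coeff i)

variable {C : ℝ} (hH : ∀ n, ∀ x ∈ Icc (0:ℝ) 1, ‖H n x‖ ≤ C)
include hH

lemma tendsto_setIntegral_mul_of_continuousOn
    (hpoly : ∀ P : ℝ[X], Tendsto (fun n => ∫ x in Icc 0 1, H n x * P.eval x) atTop (𝓝 0))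
    {φ : ℝ → ℝ} (hφ : ContinuousOn φ (Icc 0 1)) :
    Tendsto (fun n => ∫ x in Icc 0 1, H n x * φ x) atTop (𝓝 0) := by
  refine tendsto_integral_mul_of_forall_approx (fun n => (hHint n).aestronglyMeasurable)
    (fun n => ae_restrict_of_forall_mem measurableSet_Icc (hH n))
    (hφ.integrableOn_compact isCompact_Icc) fun δ hδ => ?_
  obtain ⟨P, hP⟩ := exists_polynomial_near_of_continuousOn 0 1 φ hφ δ hδ
  refine ⟨fun x => P.eval x, P.continuous.continuousOn.integrableOn_compact isCompact_Icc, ?_,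
    hpoly P⟩
  calc ∫ x in Icc 0 1, ‖φ x - P.eval x‖ ≤ ∫ _ in Icc (0:ℝ) 1, δ :=
        setIntegral_mono_on ((hφ.sub P.continuous.continuousOn).norm.integrableOn_compact
          isCompact_Icc) (integrableOn_const (by simp)) measurableSet_Icc
          fun x hx => by rw [Real.norm_eq_abs, abs_sub_comm]; exact (hP x hx).le
    _ = δ := by simp

lemma tendsto_setIntegral_mul_indicator
    (hcont : ∀ φ : ℝ → ℝ, ContinuousOn φ (Icc 0 1) →
      Tendsto (fun n => ∫ x in Icc 0 1, H n x * φ x) atTop (𝓝 0)) (a b : ℝ) :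
    Tendsto (fun n => ∫ x in Icc 0 1, H n x * (Ioc a b).indicator 1 x) atTop (𝓝 0) := by
  have hind : Integrable ((Ioc a b).indicator (1 : ℝ → ℝ)) :=
    (integrable_indicator_iff measurableSet_Ioc).2 (integrableOn_const measure_Ioc_lt_top.ne)
  refine tendsto_integral_mul_of_forall_approx (fun n => (hHint n).aestronglyMeasurable)
    (fun n => ae_restrict_of_forall_mem measurableSet_Icc (hH n)) hind.integrableOn
    fun δ hδ => ?_
  obtain ⟨ψ, -, hψδ, hψ, hψint⟩ := hind.exists_hasCompactSupport_integral_sub_le hδ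
  refine ⟨ψ, hψint.integrableOn, ?_, hcont ψ hψ.continuousOn⟩
  exact (setIntegral_le_integral (hind.sub hψint).norm
    (Eventually.of_forall fun _ => norm_nonneg _)).trans hψδ

lemma tendsto_intervalIntegral_of_continuousOn
    (hcont : ∀ φ : ℝ → ℝ, ContinuousOn φ (Icc 0 1) →
      Tendsto (fun n => ∫ x in Icc 0 1, H n x * φ x) atTop (𝓝 0)) {t : ℝ} (ht : t ∈ Icc 0 1) :
    Tendsto (fun n => ∫ x in 0..t, H n x) atTop (𝓝 0) := by
  refine (tendsto_setIntegral_mul_indicator hHint hH hcont 0 t).congr fun n => ?_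
  have hsub : Ioc 0 t ⊆ Icc 0 1 := fun x hx => ⟨hx.1.le, hx.2.trans ht.2⟩
  simp_rw [← indicator_mul_right, Pi.one_apply, mul_one]
  rw [setIntegral_indicator measurableSet_Ioc, inter_eq_right.2 hsub,
    intervalIntegral.integral_of_le ht.1]

lemma tendstoUniformlyOn_intervalIntegral
    (hpt : ∀ t ∈ Icc (0:ℝ) 1, Tendsto (fun n => ∫ x in 0..t, H n x) atTop (𝓝 0)) :
    TendstoUniformlyOn (fun n t => ∫ x in 0..t, H n x) 0 atTop (Icc 0 1) := by
  have hii n {s} (hs : s ∈ Icc (0:ℝ) 1) : IntervalIntegrable (H n) volume 0 s :=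
    ((hHint n).mono_set (uIcc_subset_Icc ⟨le_rfl, zero_le_one⟩ hs)).intervalIntegrable
  set G : ℕ → Icc (0:ℝ) 1 → ℝ := fun n t => ∫ x in 0..(t : ℝ), H n x
  have hlip n : LipschitzWith C.toNNReal (G n) := LipschitzWith.of_dist_le_mul fun s t => by
    rw [Real.dist_eq, intervalIntegral.integral_interval_sub_left (hii n s.2) (hii n t.2),
      Subtype.dist_eq, Real.dist_eq]
    refine (intervalIntegral.norm_integral_le_of_norm_le_const (f := H n) fun x hx => ?_).trans
      (mul_le_mul_of_nonneg_right (Real.le_coe_toNNReal C) (abs_nonneg _))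
    exact hH n x (uIcc_subset_Icc t.2 s.2 (uIoc_subset_uIcc hx))
  rw [tendstoUniformlyOn_iff_tendstoUniformly_comp_coe]
  exact UniformFun.tendsto_iff_tendstoUniformly.1 <|
    ((LipschitzWith.uniformEquicontinuous G _ hlip).equicontinuous.tendsto_uniformFun_iff_pi
      _ 0).2 (tendsto_pi_nhds.2 fun t => hpt t t.2)

end UnitInterval

lemma cutDist_nonneg (f g : ℝ → ℝ) : 0 ≤ cutDist f g :=
  Real.sSup_nonneg (by rintro _ ⟨a, b, -, -, -, rfl⟩; exact abs_nonneg _)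

lemma cutDist_le_of_forall_abs_intervalIntegral_le {f g : ℝ → ℝ}
    (hint : IntegrableOn (fun x => f x - g x) (Icc 0 1)) {ε : ℝ} (hε : 0 ≤ ε)
    (h : ∀ t ∈ Icc (0:ℝ) 1, |∫ x in 0..t, (f x - g x)| ≤ ε) : cutDist f g ≤ 2 * ε := by
  refine Real.sSup_le ?_ (by positivity)
  rintro _ ⟨a, b, ha, hab, hb, rfl⟩
  have ha1 : a ∈ Icc (0:ℝ) 1 := ⟨ha, hab.trans hb⟩
  have hb1 : b ∈ Icc (0:ℝ) 1 := ⟨ha.trans hab, hb⟩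
  have hii {s} (hs : s ∈ Icc (0:ℝ) 1) : IntervalIntegrable (fun x => f x - g x) volume 0 s :=
    (hint.mono_set (uIcc_subset_Icc ⟨le_rfl, zero_le_one⟩ hs)).intervalIntegrable
  rw [← intervalIntegral.integral_interval_sub_left (hii hb1) (hii ha1)]
  linarith [abs_sub (∫ x in 0..b, (f x - g x)) (∫ x in 0..a, (f x - g x)), h a ha1, h b hb1]

lemma tendsto_cutDist_of_tendstoUniformlyOn {f : ℕ → ℝ → ℝ} {g : ℝ → ℝ}
    (hint : ∀ n, IntegrableOn (fun x => f n x - g x) (Icc 0 1))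
    (h : TendstoUniformlyOn (fun n t => ∫ x in 0..t, (f n x - g x)) 0 atTop (Icc 0 1)) :
    Tendsto (fun n => cutDist (f n) g) atTop (𝓝 0) := by
  refine tendsto_order.2 ⟨fun a ha => Eventually.of_forall fun n =>
    ha.trans_le (cutDist_nonneg _ _), fun ε hε => ?_⟩
  filter_upwards [Metric.tendstoUniformlyOn_iff.1 h (ε / 3) (by positivity)] with n hn
  refine (cutDist_le_of_forall_abs_intervalIntegral_le (ε := ε / 3) (hint n) (by positivity)
    fun t ht => ?_).trans_lt (by linarith)
  simpa [abs_sub_comm] using (hn t ht).le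

lemma integrableOn_Icc_of_mapsTo {F : ℝ → ℝ} (hF : Measurable F)
    (hF1 : MapsTo F (Icc 0 1) (Icc 0 1)) : IntegrableOn F (Icc 0 1) :=
  Measure.integrableOn_of_bounded (by simp) hF.aestronglyMeasurable (M := 1) <|
    ae_restrict_of_forall_mem measurableSet_Icc fun _ hx => by
      rw [Real.norm_of_nonneg (hF1 hx).1]
      exact (hF1 hx).2

lemma tendsto_setIntegral_sub_mul_one_sub_pow {f : ℕ → ℝ → ℝ} {g : ℝ → ℝ}
    (hf : ∀ n, Measurable (f n)) (hg : Measurable g)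
    (hf1 : ∀ n, MapsTo (f n) (Icc 0 1) (Icc 0 1)) (hg1 : MapsTo g (Icc 0 1) (Icc 0 1))
    (h : ∀ (ℓ : ℕ) (u : Fin ℓ → Bool),
      Tendsto (fun n => wordDensity u (f n)) atTop (𝓝 (wordDensity u g))) (m : ℕ) :
    Tendsto (fun n => ∫ x in Icc 0 1, (f n x - g x) * (1 - x) ^ m) atTop (𝓝 0) := by
  have hmoment {F : ℝ → ℝ} (hF : Measurable F) (hF1 : MapsTo F (Icc 0 1) (Icc 0 1)) :
      ∫ x in Icc 0 1, F x * (1 - x) ^ m =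
        (m + 1 : ℝ)⁻¹ * ∑ u : Fin m → Bool, wordDensity (Fin.cons true u) F := by
    rw [sum_wordDensity_cons_true m hF hF1, inv_mul_cancel_left₀ (by positivity)]
  have hint {F : ℝ → ℝ} (hF : Measurable F) (hF1 : MapsTo F (Icc 0 1) (Icc 0 1)) :
      IntegrableOn (fun x => F x * (1 - x) ^ m) (Icc 0 1) :=
    (integrableOn_Icc_of_mapsTo hF hF1).mul_continuousOn (by fun_prop) isCompact_Icc
  have hsub n : ∫ x in Icc 0 1, (f n x - g x) * (1 - x) ^ m =
      (m + 1 : ℝ)⁻¹ * ∑ u : Fin m → Bool, wordDensity (Fin.cons true u) (f n) -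
        (m + 1 : ℝ)⁻¹ * ∑ u : Fin m → Bool, wordDensity (Fin.cons true u) g := by
    simp_rw [sub_mul]
    rw [integral_sub (hint (hf n) (hf1 n)) (hint hg hg1), hmoment (hf n) (hf1 n), hmoment hg hg1]
  simp_rw [hsub]
  rw [← sub_self ((m + 1 : ℝ)⁻¹ * ∑ u : Fin m → Bool, wordDensity (Fin.cons true u) g)]
  exact ((tendsto_finsetSum _ fun u _ => h _ _).const_mul _).sub tendsto_const_nhds

theorem stmt8 (f : ℕ → ℝ → ℝ) (g : ℝ → ℝ)
    (hf : ∀ n, Measurable (f n)) (hg : Measurable g)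
    (hf1 : ∀ n, ∀ x ∈ Set.Icc (0:ℝ) 1, f n x ∈ Set.Icc (0:ℝ) 1)
    (hg1 : ∀ x ∈ Set.Icc (0:ℝ) 1, g x ∈ Set.Icc (0:ℝ) 1)
    (h : ∀ (ℓ : ℕ) (u : Fin ℓ → Bool),
      Filter.Tendsto (fun n => wordDensity u (f n)) Filter.atTop (nhds (wordDensity u g))) :
    Filter.Tendsto (fun n => cutDist (f n) g) Filter.atTop (nhds 0) := by
  have hint n : IntegrableOn (fun x => f n x - g x) (Icc 0 1) :=
    (integrableOn_Icc_of_mapsTo (hf n) (hf1 n)).sub (integrableOn_Icc_of_mapsTo hg hg1)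
  have hbound n : ∀ x ∈ Icc (0:ℝ) 1, ‖f n x - g x‖ ≤ 1 := fun x hx =>
    Real.dist_le_of_mem_Icc_01 (hf1 n x hx) (hg1 x hx)
  have hpoly := tendsto_setIntegral_mul_eval hint
    (tendsto_setIntegral_sub_mul_one_sub_pow hf hg hf1 hg1 h)
  have hcont φ (hφ : ContinuousOn φ (Icc 0 1)) :=
    tendsto_setIntegral_mul_of_continuousOn hint hbound hpoly hφ
  exact tendsto_cutDist_of_tendstoUniformlyOn hint <| tendstoUniformlyOn_intervalIntegral hint
    hbound fun _ ht => tendsto_intervalIntegral_of_continuousOn hint hbound hcont ht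
end

section
/- Let f : [0,1] → [0,1] be measurable with F(x) = ∫₀^x f(t)dt. Then for all i, j ∈ ℕ, ∫₀¹ x^i F(x)^j dx = (i! j!/(i+j+1)!) ∑_{u ∈ {0,1}^{i+j+1}, u₁+⋯+u_{i+j} ≥ j} C(u₁+⋯+u_{i+j}, j) t(u, f). -/
open MeasureTheory

/-
Let `e_j(y) = ∑_{|S| = j} ∏_{k ∈ S} f(y_k)`. Fixing a set `S` of `j` positions among the first
`i + j` and summing the weights `∏ₖ f^{u_k}(x_k)` over all words with ones on `S` leaves
`∏_{k ∈ S} f(x_k)`, so `∑_u C(u₁ + ⋯ + u_{i+j}, j) ∏ₖ f^{u_k}(x_k) = e_j(x₁, …, x_{i+j})`.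
Integrating over the ordered simplex, and there first over the largest coordinate `t`, the
right-hand side becomes `i! j! ∫₀¹ ∫_{0 ≤ y₁ < ⋯ < y_{i+j} ≤ t} e_j(y) dy dt`. Since `e_j` is
symmetric, `(i + j)!` times its integral over the ordered simplex of side `t` is its integral over
the cube `[0, t]^{i+j}`, which by Fubini equals `C(i + j, j) t^i F(t)^j`.
-/

open Set Finset Function

section Bernoulli

variable {ι : Type*} [Fintype ι] [DecidableEq ι]

lemma sum_ite_forall_mem_prod_bernoulli (S : Finset ι) (a : ι → ℝ) :
    ∑ v : ι → Bool, (if ∀ k ∈ S, v k = true then ∏ k, (if v k then a k else 1 - a k) else 0) =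
      ∏ k ∈ S, a k := by
  have hfactor : ∀ v : ι → Bool,
      (if ∀ k ∈ S, v k = true then ∏ k, (if v k then a k else 1 - a k) else 0) =
        ∏ k, (if v k then a k else if k ∈ S then 0 else 1 - a k) := by
    intro v
    split_ifs with hv
    · refine prod_congr rfl fun k _ => ?_
      cases hk : v k
      · have hkS : k ∉ S := fun h => by simpa [hk] using hv k h
        simp [hkS]
      · rfl
    · push Not at hv
      obtain ⟨k, hkS, hk⟩ := hv
      exact (prod_eq_zero (mem_univ k) (by simp [hk, hkS])).symm
  rw [Fintype.sum_congr _ _ hfactor, ← Fintype.prod_ite_mem]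
  refine (Fintype.prod_sum fun k (b : Bool) =>
    if b then a k else if k ∈ S then 0 else 1 - a k).symm.trans (prod_congr rfl fun k _ => ?_)
  split_ifs <;> simp [*]

theorem sum_choose_mul_prod_bernoulli (j : ℕ) (a : ι → ℝ) :
    ∑ v : ι → Bool, ((#{k | v k = true}).choose j : ℝ) * ∏ k, (if v k then a k else 1 - a k) =
      ∑ S ∈ powersetCard j univ, ∏ k ∈ S, a k := by
  have hchoose : ∀ v : ι → Bool, ((#{k | v k = true}).choose j : ℝ) =
      ∑ S ∈ powersetCard j univ, if ∀ k ∈ S, v k = true then 1 else 0 := by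
    intro v
    rw [sum_boole, ← card_powersetCard]
    congr 2
    ext S
    simp [mem_powersetCard, subset_iff, and_comm]
  simp only [hchoose, sum_mul, ite_mul, one_mul, zero_mul]
  rw [sum_comm]
  exact sum_congr rfl fun S _ => sum_ite_forall_mem_prod_bernoulli S a

end Bernoulli

theorem sum_choose_mul_prod_bernoulli_init {m : ℕ} (j : ℕ) (a : Fin (m + 1) → ℝ) :
    ∑ u : Fin (m + 1) → Bool,
        ((univ.filter fun k : Fin m => u k.castSucc = true).card.choose j : ℝ) *
          ∏ k, (if u k then a k else 1 - a k) =
      ∑ S ∈ powersetCard j (univ : Finset (Fin m)), ∏ k ∈ S, a k.castSucc := by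
  rw [← sum_choose_mul_prod_bernoulli, ← (Fin.snocEquiv fun _ => Bool).sum_comp,
    Fintype.sum_prod_type, sum_comm]
  refine Fintype.sum_congr _ _ fun v => ?_
  simp only [Fin.snocEquiv, Equiv.coe_fn_mk, Fin.snoc_castSucc, Fin.prod_univ_castSucc,
    Fin.snoc_last]
  rw [← mul_sum, ← mul_sum, Fintype.sum_bool]
  simp

namespace Simplex

def cube (ℓ : ℕ) (b : ℝ) : Set (Fin ℓ → ℝ) := univ.pi fun _ => Icc 0 b

def ordered (ℓ : ℕ) (b : ℝ) : Set (Fin ℓ → ℝ) := {x | (∀ i, x i ∈ Icc 0 b) ∧ StrictMono x}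

lemma ordered_subset_cube (ℓ : ℕ) (b : ℝ) : ordered ℓ b ⊆ cube ℓ b := fun _ hx i _ => hx.1 i

lemma measurableSet_cube (ℓ : ℕ) (b : ℝ) : MeasurableSet (cube ℓ b) :=
  .univ_pi fun _ => measurableSet_Icc

lemma measurableSet_ordered (ℓ : ℕ) (b : ℝ) : MeasurableSet (ordered ℓ b) := by
  have : ordered ℓ b = cube ℓ b ∩ ⋂ i, ⋂ j, ⋂ (_ : i < j), {x | x i < x j} := by
    ext x
    simp only [ordered, cube, StrictMono, mem_ofPred_eq, mem_inter_iff, mem_pi, mem_univ,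
      true_implies, mem_iInter]
  rw [this]
  exact (measurableSet_cube ℓ b).inter <| .iInter fun i => .iInter fun j =>
    .iInter fun _ => measurableSet_lt (measurable_pi_apply i) (measurable_pi_apply j)

lemma integrableOn_cube_prod {ℓ : ℕ} {b : ℝ} {g : Fin ℓ → ℝ → ℝ}
    (hg : ∀ k, IntegrableOn (g k) (Icc 0 b)) :
    IntegrableOn (fun x => ∏ k, g k (x k)) (cube ℓ b) := by
  rw [IntegrableOn, cube, volume_pi, Measure.restrict_pi_pi]
  exact .fintype_prod hg

lemma integral_cube_prod {ℓ : ℕ} (b : ℝ) (g : Fin ℓ → ℝ → ℝ) :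
    ∫ x in cube ℓ b, ∏ k, g k (x k) = ∏ k, ∫ t in Icc 0 b, g k t := by
  rw [cube, volume_pi, Measure.restrict_pi_pi]
  exact integral_fintype_prod_eq_prod _

lemma volume_setOf_apply_eq_apply {ℓ : ℕ} {i j : Fin ℓ} (hij : i ≠ j) :
    volume {x : Fin ℓ → ℝ | x i = x j} = 0 := by
  let p : Submodule ℝ (Fin ℓ → ℝ) :=
    LinearMap.ker (LinearMap.proj (R := ℝ) (φ := fun _ : Fin ℓ => ℝ) i - LinearMap.proj j)
  have hp : p ≠ ⊤ := fun h => by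
    have : Pi.single i 1 ∈ p := h ▸ Submodule.mem_top
    simp [p, hij] at this
  have : {x : Fin ℓ → ℝ | x i = x j} = p := by
    ext x
    simp [p, sub_eq_zero]
  rw [this]
  exact Measure.addHaar_submodule volume p hp

lemma ae_injective (ℓ : ℕ) : ∀ᵐ x : Fin ℓ → ℝ, Injective x := by
  have : ∀ i j : Fin ℓ, ∀ᵐ x : Fin ℓ → ℝ, x i = x j → i = j := by
    intro i j
    rcases eq_or_ne i j with rfl | hij
    · exact .of_forall fun _ _ => rfl
    · filter_upwards [compl_mem_ae_iff.2 (volume_setOf_apply_eq_apply hij)] with x hx h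
      exact absurd h hx
  filter_upwards [ae_all_iff.2 fun i => ae_all_iff.2 (this i)] with x hx i j using hx i j

lemma comp_perm_mem_ordered_iff {ℓ : ℕ} {b : ℝ} {x : Fin ℓ → ℝ} (hx : Injective x)
    (σ : Equiv.Perm (Fin ℓ)) : x ∘ σ ∈ ordered ℓ b ↔ x ∈ cube ℓ b ∧ σ = Tuple.sort x := by
  have hcube : (∀ i, x (σ i) ∈ Icc 0 b) ↔ x ∈ cube ℓ b :=
    ⟨fun h i _ => σ.apply_symm_apply i ▸ h (σ.symm i), fun h i => h (σ i) trivial⟩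
  refine ⟨fun ⟨hb, hmono⟩ => ⟨hcube.1 hb, ?_⟩, fun ⟨hb, hσ⟩ => ⟨hcube.2 hb, ?_⟩⟩
  · exact Equiv.coe_fn_injective <| hx.comp_left <|
      Tuple.unique_monotone hmono.monotone (Tuple.monotone_sort x)
  · exact hσ ▸ (Tuple.monotone_sort x).strictMono_of_injective (hx.comp (Tuple.sort x).injective)

lemma measurePreserving_comp_perm {ℓ : ℕ} (σ : Equiv.Perm (Fin ℓ)) :
    MeasurePreserving (fun x : Fin ℓ → ℝ => x ∘ σ) := by
  have h : (fun x : Fin ℓ → ℝ => x ∘ σ) = MeasurableEquiv.piCongrLeft (fun _ => ℝ) σ.symm := by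
    ext x i
    simp [MeasurableEquiv.coe_piCongrLeft, Equiv.piCongrLeft_apply_eq_cast]
  exact h ▸ volume_measurePreserving_piCongrLeft _ _

theorem integral_cube_eq_factorial_smul_integral_ordered {E : Type*} [NormedAddCommGroup E]
    [NormedSpace ℝ E] {ℓ : ℕ} {b : ℝ} {g : (Fin ℓ → ℝ) → E} (hg : IntegrableOn g (cube ℓ b))
    (hsymm : ∀ (σ : Equiv.Perm (Fin ℓ)) x, g (x ∘ σ) = g x) :
    ∫ x in cube ℓ b, g x = ℓ.factorial • ∫ x in ordered ℓ b, g x := by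
  set A : Equiv.Perm (Fin ℓ) → Set (Fin ℓ → ℝ) := fun σ => (· ∘ σ) ⁻¹' ordered ℓ b
  have hA : ∀ σ, MeasurableSet (A σ) := fun σ =>
    (measurePreserving_comp_perm σ).measurable (measurableSet_ordered ℓ b)
  have hA_cube : ∀ σ, A σ ⊆ cube ℓ b := fun σ x hx i _ =>
    σ.apply_symm_apply i ▸ hx.1 (σ.symm i)
  have hA_integral : ∀ σ, ∫ x in A σ, g x = ∫ x in ordered ℓ b, g x := fun σ => by
    rw [← (measurePreserving_comp_perm σ).setIntegral_preimage_emb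
      ((measurePreserving_comp_perm σ).measurable.measurableEmbedding
        σ.surjective.injective_comp_right) g (ordered ℓ b)]
    simp only [hsymm]
    rfl
  -- off the null set of tuples with a repeated entry, exactly one permutation sorts `x`
  have hcover : (cube ℓ b).indicator g =ᵐ[volume] fun x => ∑ σ, (A σ).indicator g x := by
    filter_upwards [ae_injective ℓ] with x hx
    classical
    simp only [indicator_apply, A, Set.mem_preimage, comp_perm_mem_ordered_iff hx, ite_and]
    split_ifs <;> simp
  calc ∫ x in cube ℓ b, g x
      = ∫ x, ∑ σ, (A σ).indicator g x := by
        rw [← integral_indicator (measurableSet_cube ℓ b)]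
        exact integral_congr_ae hcover
    _ = ∑ σ : Equiv.Perm (Fin ℓ), ∫ x in ordered ℓ b, g x := by
        rw [integral_finsetSum _ fun σ _ => (hg.mono_set (hA_cube σ)).integrable_indicator (hA σ)]
        simp only [integral_indicator (hA _), hA_integral]
    _ = ℓ.factorial • ∫ x in ordered ℓ b, g x := by
        rw [sum_const, card_univ, Fintype.card_perm, Fintype.card_fin]

lemma snoc_mem_ordered_iff {ℓ : ℕ} {b t : ℝ} {y : Fin ℓ → ℝ} :
    (Fin.snoc y t : Fin (ℓ + 1) → ℝ) ∈ ordered (ℓ + 1) b ↔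
      t ∈ Icc 0 b ∧ (∀ i, y i ∈ Icc 0 b) ∧ StrictMono y ∧ ∀ i, y i < t := by
  simp only [ordered, mem_ofPred_eq, Fin.forall_fin_succ', Fin.snoc_castSucc, Fin.snoc_last]
  rw [← Fin.insertNth_last', Fin.strictMono_insertNth_iff]
  simp only [Fin.castSucc_lt_last, true_implies, Fin.last_le_iff, Fin.castSucc_ne_last]
  tauto

lemma ae_snoc_mem_ordered_iff {ℓ : ℕ} {b t : ℝ} (ht : t ∈ Icc 0 b) :
    ∀ᵐ y : Fin ℓ → ℝ, (Fin.snoc y t : Fin (ℓ + 1) → ℝ) ∈ ordered (ℓ + 1) b ↔ y ∈ ordered ℓ t := by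
  filter_upwards [ae_all_iff.2 fun i => Measure.ae_eval_ne _ i t] with y hy
  rw [snoc_mem_ordered_iff]
  constructor
  · rintro ⟨-, hyb, hmono, hlt⟩
    exact ⟨fun i => ⟨(hyb i).1, (hlt i).le⟩, hmono⟩
  · rintro ⟨hyt, hmono⟩
    exact ⟨ht, fun i => ⟨(hyt i).1, (hyt i).2.trans ht.2⟩, hmono,
      fun i => (hyt i).2.lt_of_ne (hy i)⟩

theorem integral_ordered_succ {E : Type*} [NormedAddCommGroup E] [NormedSpace ℝ E] {ℓ : ℕ}
    {b : ℝ} (hb : 0 ≤ b) {G : (Fin (ℓ + 1) → ℝ) → E} (hG : IntegrableOn G (ordered (ℓ + 1) b)) :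
    ∫ x in ordered (ℓ + 1) b, G x = ∫ t in 0..b, ∫ y in ordered ℓ t, G (Fin.snoc y t) := by
  let e := (MeasurableEquiv.piFinSuccAbove (fun _ : Fin (ℓ + 1) => ℝ) (Fin.last ℓ)).symm
  have he : ∀ t y, e (t, y) = Fin.snoc y t := fun t y => Fin.insertNth_last' t y
  have hmp : MeasurePreserving e (volume.prod volume) volume :=
    (volume_preserving_piFinSuccAbove (fun _ : Fin (ℓ + 1) => ℝ) (Fin.last ℓ)).symm
  set H := (ordered (ℓ + 1) b).indicator G
  have hH : Integrable (H ∘ e) (volume.prod volume) :=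
    (hmp.integrable_comp_emb e.measurableEmbedding).2
      (hG.integrable_indicator (measurableSet_ordered _ _))
  have hslice : ∀ t, ∫ y, H (Fin.snoc y t) =
      (Icc 0 b).indicator (fun t => ∫ y in ordered ℓ t, G (Fin.snoc y t)) t := by
    intro t
    by_cases ht : t ∈ Icc 0 b
    · have hsnoc : (fun y : Fin ℓ → ℝ => (Fin.snoc y t : Fin (ℓ + 1) → ℝ)) = e ∘ Prod.mk t :=
        funext fun y => (he t y).symm
      have hmeas : Measurable fun y : Fin ℓ → ℝ => (Fin.snoc y t : Fin (ℓ + 1) → ℝ) :=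
        hsnoc ▸ e.measurable.comp measurable_prodMk_left
      rw [indicator_of_mem ht]
      simp only [H, ← indicator_comp_right fun y : Fin ℓ → ℝ => (Fin.snoc y t : Fin (ℓ + 1) → ℝ)]
      rw [integral_indicator (hmeas (measurableSet_ordered _ _))]
      exact setIntegral_congr_set (Filter.eventuallyEq_set.2 (ae_snoc_mem_ordered_iff ht))
    · rw [indicator_of_notMem ht]
      refine integral_eq_zero_of_ae (.of_forall fun y => indicator_of_notMem ?_ G)
      exact fun hy => ht (snoc_mem_ordered_iff.1 hy).1
  calc ∫ x in ordered (ℓ + 1) b, G x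
      = ∫ p, H (e p) ∂(volume.prod volume) := by
        rw [← integral_indicator (measurableSet_ordered _ _)]
        exact (hmp.integral_comp' H).symm
    _ = ∫ t, ∫ y, H (Fin.snoc y t) := by
        rw [integral_prod (fun p => H (e p)) hH]
        simp only [he]
    _ = ∫ t in 0..b, ∫ y in ordered ℓ t, G (Fin.snoc y t) := by
        simp only [hslice]
        rw [integral_indicator measurableSet_Icc, intervalIntegral.integral_of_le hb,
          integral_Icc_eq_integral_Ioc]

def esymmComp {ℓ : ℕ} (f : ℝ → ℝ) (j : ℕ) (x : Fin ℓ → ℝ) : ℝ :=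
  ∑ S ∈ powersetCard j univ, ∏ k ∈ S, f (x k)

lemma esymmComp_comp_perm {ℓ : ℕ} (f : ℝ → ℝ) (j : ℕ) (σ : Equiv.Perm (Fin ℓ))
    (x : Fin ℓ → ℝ) : esymmComp f j (x ∘ σ) = esymmComp f j x := by
  simp only [esymmComp, ← esymm_map_val]
  conv_rhs => rw [← Multiset.map_univ_val_equiv σ, Multiset.map_map]
  rfl

lemma prod_mem_eq_prod_ite {ℓ : ℕ} (S : Finset (Fin ℓ)) (f : ℝ → ℝ) (x : Fin ℓ → ℝ) :
    ∏ k ∈ S, f (x k) = ∏ k, (if k ∈ S then f else 1) (x k) := by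
  rw [← Fintype.prod_ite_mem]
  exact prod_congr rfl fun k _ => by split_ifs <;> rfl

lemma integrableOn_cube_prod_mem {ℓ : ℕ} {b : ℝ} {f : ℝ → ℝ} (hf : IntegrableOn f (Icc 0 b))
    (S : Finset (Fin ℓ)) : IntegrableOn (fun x => ∏ k ∈ S, f (x k)) (cube ℓ b) := by
  simp only [prod_mem_eq_prod_ite S f]
  refine integrableOn_cube_prod fun k => ?_
  split_ifs
  exacts [hf, integrableOn_const (by simp)]

lemma integrableOn_cube_esymmComp {ℓ : ℕ} {b : ℝ} {f : ℝ → ℝ} (hf : IntegrableOn f (Icc 0 b))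
    (j : ℕ) : IntegrableOn (esymmComp f j) (cube ℓ b) :=
  integrable_finsetSum _ fun S _ => integrableOn_cube_prod_mem hf S

theorem integral_cube_esymmComp {ℓ : ℕ} {b : ℝ} (hb : 0 ≤ b) {f : ℝ → ℝ}
    (hf : IntegrableOn f (Icc 0 b)) (j : ℕ) :
    ∫ x in cube ℓ b, esymmComp f j x = ℓ.choose j * b ^ (ℓ - j) * (∫ t in Icc 0 b, f t) ^ j := by
  have hprod : ∀ S : Finset (Fin ℓ), ∫ x in cube ℓ b, ∏ k ∈ S, f (x k) =
      (∫ t in Icc 0 b, f t) ^ #S * b ^ (ℓ - #S) := by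
    intro S
    have hfactor : ∀ k, ∫ t in Icc 0 b, (if k ∈ S then f else 1) t =
        if k ∈ S then ∫ t in Icc 0 b, f t else b := fun k => by
      split_ifs <;> simp [hb]
    simp only [prod_mem_eq_prod_ite S f, integral_cube_prod, hfactor, prod_ite, prod_const]
    simp [filter_not, card_univ_sdiff]
  simp only [esymmComp]
  rw [integral_finsetSum _ fun S _ => integrableOn_cube_prod_mem hf S,
    sum_congr rfl fun S hS => by rw [hprod S, (mem_powersetCard.1 hS).2], sum_const,
    card_powersetCard, card_univ, Fintype.card_fin, nsmul_eq_mul]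
  ring

theorem factorial_mul_factorial_mul_integral_ordered_esymmComp {i j : ℕ} {b : ℝ} (hb : 0 ≤ b)
    {f : ℝ → ℝ} (hf : IntegrableOn f (Icc 0 b)) :
    i.factorial * j.factorial * ∫ x in ordered (i + j) b, esymmComp f j x =
      b ^ i * (∫ t in 0..b, f t) ^ j := by
  have hcube := integral_cube_esymmComp (ℓ := i + j) hb hf j
  rw [integral_cube_eq_factorial_smul_integral_ordered (integrableOn_cube_esymmComp hf j)
      (esymmComp_comp_perm f j), nsmul_eq_mul, ← Nat.add_choose_mul_factorial_mul_factorial,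
    Nat.add_sub_cancel, integral_Icc_eq_integral_Ioc, ← intervalIntegral.integral_of_le hb]
    at hcube
  have hchoose : ((i + j).choose j : ℝ) ≠ 0 :=
    Nat.cast_ne_zero.2 (Nat.choose_pos (Nat.le_add_left j i)).ne'
  push_cast at hcube
  apply mul_left_cancel₀ hchoose
  linear_combination hcube

theorem integral_ordered_esymmComp_init {m j : ℕ} {f : ℝ → ℝ} (hf : IntegrableOn f (Icc 0 1)) :
    ∫ x in ordered (m + 1) 1, esymmComp f j (Fin.init x) =
      ∫ t in 0..1, ∫ y in ordered m t, esymmComp f j y := by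
  have hG : IntegrableOn (fun x => esymmComp f j (Fin.init x)) (ordered (m + 1) 1) := by
    have hmap : ∀ x : Fin (m + 1) → ℝ, esymmComp f j (Fin.init x) =
        ∑ S ∈ powersetCard j univ, ∏ k ∈ S.map Fin.castSuccEmb, f (x k) := fun x => by
      simp [esymmComp, Fin.init]
    simp only [hmap]
    exact IntegrableOn.mono_set
      (integrable_finsetSum _ fun S _ => integrableOn_cube_prod_mem hf _)
      (ordered_subset_cube _ _)
  rw [integral_ordered_succ zero_le_one hG]
  simp only [Fin.init_snoc]

lemma wordDensity_eq {ℓ : ℕ} (u : Fin ℓ → Bool) (f : ℝ → ℝ) :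
    wordDensity u f =
      ℓ.factorial * ∫ x in ordered ℓ 1, ∏ k, (if u k then f (x k) else 1 - f (x k)) :=
  rfl

theorem sum_choose_mul_wordDensity {m j : ℕ} {f : ℝ → ℝ} (hf : IntegrableOn f (Icc 0 1)) :
    ∑ u : Fin (m + 1) → Bool,
        ((univ.filter fun k : Fin m => u k.castSucc = true).card.choose j : ℝ) * wordDensity u f =
      (m + 1).factorial * ∫ x in ordered (m + 1) 1, esymmComp f j (Fin.init x) := by
  have h1f : IntegrableOn (fun t => 1 - f t) (Icc 0 1) := (integrableOn_const (by simp)).sub hf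
  have hword : ∀ u : Fin (m + 1) → Bool, IntegrableOn
      (fun x => ∏ k, (if u k then f (x k) else 1 - f (x k))) (ordered (m + 1) 1) := by
    intro u
    refine IntegrableOn.mono_set (integrableOn_cube_prod
      (g := fun k t => if u k then f t else 1 - f t) fun k => ?_) (ordered_subset_cube _ _)
    cases u k
    · simpa using h1f
    · simpa using hf
  calc ∑ u : Fin (m + 1) → Bool,
        ((univ.filter fun k : Fin m => u k.castSucc = true).card.choose j : ℝ) * wordDensity u f
      = ∑ u : Fin (m + 1) → Bool, (m + 1).factorial * ∫ x in ordered (m + 1) 1,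
          ((univ.filter fun k : Fin m => u k.castSucc = true).card.choose j : ℝ) *
            ∏ k, (if u k then f (x k) else 1 - f (x k)) :=
        sum_congr rfl fun u _ => by rw [wordDensity_eq, integral_const_mul]; ring
    _ = (m + 1).factorial * ∫ x in ordered (m + 1) 1, ∑ u : Fin (m + 1) → Bool,
          ((univ.filter fun k : Fin m => u k.castSucc = true).card.choose j : ℝ) *
            ∏ k, (if u k then f (x k) else 1 - f (x k)) := by
        rw [integral_finsetSum _ fun u _ => (hword u).const_mul _, mul_sum]
    _ = (m + 1).factorial * ∫ x in ordered (m + 1) 1, esymmComp f j (Fin.init x) := by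
        congr 1
        exact setIntegral_congr_fun (measurableSet_ordered _ _) fun x _ =>
          sum_choose_mul_prod_bernoulli_init j fun k => f (x k)

end Simplex

theorem stmt12 (f : ℝ → ℝ) (hf : Measurable f)
    (hf1 : ∀ x ∈ Set.Icc (0:ℝ) 1, f x ∈ Set.Icc (0:ℝ) 1) (i j : ℕ) :
    ∫ x in (0:ℝ)..1, x ^ i * (∫ t in (0:ℝ)..x, f t) ^ j =
      ((Nat.factorial i : ℝ) * (Nat.factorial j : ℝ) / (Nat.factorial (i + j + 1) : ℝ)) *
        ∑ u : Fin (i + j + 1) → Bool,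
          (if j ≤ (Finset.univ.filter (fun m : Fin (i + j) => u m.castSucc = true)).card then
            (Nat.choose
                ((Finset.univ.filter (fun m : Fin (i + j) => u m.castSucc = true)).card) j : ℝ) *
              wordDensity u f
          else 0) := by
  have hfi : IntegrableOn f (Icc 0 1) :=
    Measure.integrableOn_of_bounded (by simp) hf.aestronglyMeasurable (M := 1) <|
      ae_restrict_of_forall_mem measurableSet_Icc fun x hx => by
        rw [Real.norm_eq_abs, abs_le]
        exact ⟨by linarith [(hf1 x hx).1], (hf1 x hx).2⟩
  have hchoose : ∀ {c : ℕ} {w : ℝ}, (if j ≤ c then (c.choose j : ℝ) * w else 0) = c.choose j * w :=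
    fun {c w} => by
      split_ifs with h
      · rfl
      · rw [Nat.choose_eq_zero_of_lt (not_le.1 h), Nat.cast_zero, zero_mul]
  have hmoment : ∫ x in (0:ℝ)..1, x ^ i * (∫ t in (0:ℝ)..x, f t) ^ j =
      i.factorial * j.factorial *
        ∫ t in 0..1, ∫ y in Simplex.ordered (i + j) t, Simplex.esymmComp f j y := by
    rw [← intervalIntegral.integral_const_mul]
    refine intervalIntegral.integral_congr fun t ht => ?_
    rw [Set.uIcc_of_le zero_le_one] at ht
    exact (Simplex.factorial_mul_factorial_mul_integral_ordered_esymmComp ht.1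
      (hfi.mono_set (Icc_subset_Icc_right ht.2))).symm
  simp only [hchoose]
  rw [hmoment, Simplex.sum_choose_mul_wordDensity hfi, Simplex.integral_ordered_esymmComp_init hfi]
  field_simp
end

section
/- Every constant function f ≡ a ∈ [0,1] on [0,1] is finitely forcible by words of length at most three: if h : [0,1] → [0,1] is measurable and t(u,h) = t(u,f) for all binary words u of length at most 3, then h = a almost everywhere. -/
open MeasureTheory

/-!
Write `k = h - a` and `K(s) = ∫_s^1 k`. Expanding `k = (1 - a) h - a (1 - h)` and
`1 = h + (1 - h)` shows that `∫_{0 ≤ x₀ < x₁ < x₂ ≤ 1} k(x₁) k(x₂)` is a linear combination of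
the densities of the words of length three, so it takes the same value for `h` as for the
constant `a`, namely `0`. Integrating out `x₀` and then `x₂`, and integrating by parts, this
integral equals `½ ∫₀¹ K²`. Hence the continuous function `K` vanishes on `[0,1]`, and by
Lebesgue's differentiation theorem `k = -K' = 0` almost everywhere.
-/

open Set

def orderedCube (n : ℕ) : Set (Fin n → ℝ) :=
  {x | (∀ i, x i ∈ Icc (0:ℝ) 1) ∧ ∀ i j : Fin n, i < j → x i < x j}

lemma wordDensity_eq_setIntegral_orderedCube {ℓ : ℕ} (u : Fin ℓ → Bool) (f : ℝ → ℝ) :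
    wordDensity u f =
      ℓ.factorial * ∫ x in orderedCube ℓ, ∏ i, (if u i then f (x i) else 1 - f (x i)) :=
  rfl

lemma measurableSet_orderedCube (n : ℕ) : MeasurableSet (orderedCube n) := by
  simp only [orderedCube, ofPred_and, ofPred_forall]
  exact (MeasurableSet.iInter fun i => measurable_pi_apply i measurableSet_Icc).inter
    (MeasurableSet.iInter fun i => .iInter fun j => .iInter fun _ =>
      measurableSet_lt (measurable_pi_apply i) (measurable_pi_apply j))

lemma volume_orderedCube_ne_top (n : ℕ) : volume (orderedCube n) ≠ ⊤ := by
  have hsub : orderedCube n ⊆ Icc 0 1 := fun _ hx => ⟨fun i => (hx.1 i).1, fun i => (hx.1 i).2⟩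
  exact ((measure_mono hsub).trans_lt (by simp [Real.volume_Icc_pi])).ne

lemma integrableOn_orderedCube {n : ℕ} {Φ : (Fin n → ℝ) → ℝ} (hΦ : Measurable Φ) {C : ℝ}
    (hC : ∀ x ∈ orderedCube n, |Φ x| ≤ C) : IntegrableOn Φ (orderedCube n) :=
  Measure.integrableOn_of_bounded (volume_orderedCube_ne_top n) hΦ.aestronglyMeasurable
    ((ae_restrict_iff' (measurableSet_orderedCube n)).2 (ae_of_all _ hC))

lemma cons_mem_orderedCube_iff {n : ℕ} (t : ℝ) (y : Fin (n + 1) → ℝ) :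
    Fin.cons t y ∈ orderedCube (n + 2) ↔ t ∈ Ico 0 (y 0) ∧ y ∈ orderedCube (n + 1) := by
  constructor
  · rintro ⟨hI, hlt⟩
    exact ⟨⟨(hI 0).1, hlt 0 1 Fin.zero_lt_one⟩, fun i => hI i.succ,
      fun i j hij => hlt i.succ j.succ (Fin.succ_lt_succ_iff.2 hij)⟩
  · rintro ⟨ht, hy, hyy⟩
    have hty (j : Fin (n + 1)) : t < y j :=
      ht.2.trans_le <| (Fin.zero_le j).eq_or_lt.elim (fun h => h ▸ le_rfl) fun h => (hyy 0 j h).le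
    refine ⟨Fin.cases ⟨ht.1, (hty 0).le.trans (hy 0).2⟩ hy, fun i j hij => ?_⟩
    induction j using Fin.cases with
    | zero => exact absurd hij (Fin.not_lt_zero i)
    | succ j =>
      induction i using Fin.cases with
      | zero => exact hty j
      | succ i => exact hyy i j (Fin.succ_lt_succ_iff.1 hij)

lemma sum_mul_wordDensity {ℓ : ℕ} {f : ℝ → ℝ} (hf : Measurable f)
    (hf01 : ∀ x ∈ Icc (0:ℝ) 1, f x ∈ Icc (0:ℝ) 1) (c : Fin ℓ → Bool → ℝ) :
    ∑ u : Fin ℓ → Bool, (∏ i, c i (u i)) * wordDensity u f = ℓ.factorial *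
      ∫ x in orderedCube ℓ, ∏ i, (c i true * f (x i) + c i false * (1 - f (x i))) := by
  have hint (u : Fin ℓ → Bool) :
      IntegrableOn (fun x => ∏ i, (if u i then f (x i) else 1 - f (x i))) (orderedCube ℓ) := by
    refine integrableOn_orderedCube (C := 1) ?_ fun x hx => ?_
    · refine Finset.measurable_prod _ fun i _ => ?_
      cases u i
      · exact measurable_const.sub (hf.comp (measurable_pi_apply i))
      · exact hf.comp (measurable_pi_apply i)
    · rw [Finset.abs_prod]
      refine Finset.prod_le_one (fun _ _ => abs_nonneg _) fun i _ => ?_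
      obtain ⟨h0, h1⟩ := hf01 _ (hx.1 i)
      cases u i <;> simp only [Bool.false_eq_true, if_false, if_true] <;>
        exact abs_le.2 ⟨by linarith, by linarith⟩
  have hpt (x : Fin ℓ → ℝ) : ∏ i, (c i true * f (x i) + c i false * (1 - f (x i))) =
      ∑ u : Fin ℓ → Bool, (∏ i, c i (u i)) * ∏ i, (if u i then f (x i) else 1 - f (x i)) := by
    simp_rw [← Finset.prod_mul_distrib]
    rw [← Fintype.prod_sum fun i b => c i b * if b then f (x i) else 1 - f (x i)]
    simp
  simp_rw [hpt, integral_finsetSum _ fun u _ => (hint u).const_mul _, integral_const_mul,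
    Finset.mul_sum, wordDensity_eq_setIntegral_orderedCube, mul_left_comm]

lemma setIntegral_orderedCube_sub_mul_sub_eq_zero {f : ℝ → ℝ} (hf : Measurable f)
    (hf01 : ∀ x ∈ Icc (0:ℝ) 1, f x ∈ Icc (0:ℝ) 1) {a : ℝ} (ha : a ∈ Icc (0:ℝ) 1)
    (hdens : ∀ u : Fin 3 → Bool, wordDensity u f = wordDensity u fun _ => a) :
    ∫ x in orderedCube 3, (f (x 1) - a) * (f (x 2) - a) = 0 := by
  -- the first letter is summed out, the other two turn `f` into `(1 - a) f - a (1 - f) = f - a`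
  let c : Fin 3 → Bool → ℝ := fun i b => if i = 0 then 1 else if b then 1 - a else -a
  have hc (g : ℝ → ℝ) (x : Fin 3 → ℝ) :
      ∏ i, (c i true * g (x i) + c i false * (1 - g (x i))) = (g (x 1) - a) * (g (x 2) - a) := by
    simp only [c, Fin.prod_univ_three, Fin.reduceEq, ↓reduceIte, Bool.false_eq_true]
    ring
  have hconst : ∏ i, (c i true * a + c i false * (1 - a)) = 0 := by
    simpa using hc (fun _ => a) 0
  have hsum : ∑ u : Fin 3 → Bool, (∏ i, c i (u i)) * wordDensity u f =
      ∑ u : Fin 3 → Bool, (∏ i, c i (u i)) * wordDensity u fun _ => a := by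
    simp_rw [hdens]
  rw [sum_mul_wordDensity hf hf01 c, sum_mul_wordDensity measurable_const (fun _ _ => ha) c]
    at hsum
  simpa [hc, hconst, Nat.factorial] using hsum

lemma setIntegral_orderedCube_comp_tail {n : ℕ} {Φ : (Fin (n + 1) → ℝ) → ℝ}
    (hΦ : Measurable Φ) {C : ℝ} (hC : ∀ y ∈ orderedCube (n + 1), |Φ y| ≤ C) :
    ∫ x in orderedCube (n + 2), Φ (Fin.tail x) = ∫ y in orderedCube (n + 1), y 0 * Φ y := by
  let e := (MeasurableEquiv.piFinSuccAbove (fun _ : Fin (n + 2) => ℝ) 0).symm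
  have he : MeasurePreserving e := (volume_preserving_piFinSuccAbove _ 0).symm
  have he_apply (t : ℝ) (y : Fin (n + 1) → ℝ) : e (t, y) = Fin.cons t y := by
    simp [e, MeasurableEquiv.piFinSuccAbove_symm_apply, Fin.consEquiv]
  let S := {p : ℝ × (Fin (n + 1) → ℝ) | p.1 ∈ Ico 0 (p.2 0) ∧ p.2 ∈ orderedCube (n + 1)}
  have hS : e ⁻¹' orderedCube (n + 2) = S := by
    ext ⟨t, y⟩
    rw [mem_preimage, he_apply]
    exact cons_mem_orderedCube_iff t y
  have hSm : MeasurableSet S := hS ▸ (measurableSet_orderedCube _).preimage e.measurable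
  have hint : IntegrableOn (fun p => Φ p.2) S := by
    have : IntegrableOn (fun x => Φ (Fin.tail x)) (orderedCube (n + 2)) :=
      integrableOn_orderedCube (hΦ.comp (measurable_pi_lambda _ fun i => measurable_pi_apply _))
        fun x hx => hC _ ((cons_mem_orderedCube_iff (x 0) (Fin.tail x)).1 (by simpa using hx)).2
    rw [← hS]
    exact (he.integrableOn_comp_preimage e.measurableEmbedding).2 this
  have hinner (y : Fin (n + 1) → ℝ) : ∫ t, S.indicator (fun p => Φ p.2) (t, y) =
      (orderedCube (n + 1)).indicator (fun y => y 0 * Φ y) y := by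
    by_cases hy : y ∈ orderedCube (n + 1)
    · have : (fun t => S.indicator (fun p => Φ p.2) (t, y)) =
          (Ico 0 (y 0)).indicator fun _ => Φ y := by
        ext t
        simp [S, hy, indicator]
      rw [this, integral_indicator_const _ measurableSet_Ico, indicator_of_mem hy, measureReal_def,
        Real.volume_Ico, ENNReal.toReal_ofReal (by linarith [(hy.1 0).1]), sub_zero, smul_eq_mul]
    · simp [S, hy, indicator]
  calc ∫ x in orderedCube (n + 2), Φ (Fin.tail x)
      = ∫ p in S, Φ p.2 := by
        rw [← hS, ← he.setIntegral_preimage_emb e.measurableEmbedding]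
        rfl
    _ = ∫ y, ∫ t, S.indicator (fun p => Φ p.2) (t, y) := by
        rw [← integral_indicator hSm, Measure.volume_eq_prod, integral_prod_symm]
        exact (integrable_indicator_iff hSm).2 hint
    _ = ∫ y in orderedCube (n + 1), y 0 * Φ y := by
        simp_rw [hinner, integral_indicator (measurableSet_orderedCube _)]

lemma setIntegral_orderedCube_two {Ψ : ℝ → ℝ → ℝ} (hΨ : Measurable fun p : ℝ × ℝ => Ψ p.1 p.2)
    {C : ℝ} (hC : ∀ y ∈ orderedCube 2, |Ψ (y 0) (y 1)| ≤ C) :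
    ∫ y in orderedCube 2, Ψ (y 0) (y 1) = ∫ s in (0:ℝ)..1, ∫ t in s..1, Ψ s t := by
  let e := MeasurableEquiv.finTwoArrow (α := ℝ)
  have he : MeasurePreserving e.symm := (volume_preserving_finTwoArrow ℝ).symm
  let S := {p : ℝ × ℝ | p.1 ∈ Icc 0 1 ∧ p.2 ∈ Ioc p.1 1}
  have hS : e.symm ⁻¹' orderedCube 2 = S := by
    ext ⟨s, t⟩
    simp only [orderedCube, mem_preimage, mem_ofPred_eq, Fin.forall_fin_two, S, e,
      MeasurableEquiv.finTwoArrow_symm_apply]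
    simp only [lt_irrefl, Fin.zero_lt_one, Fin.not_lt_zero, mem_Icc, mem_Ioc]
    constructor
    · rintro ⟨⟨hs, -, ht⟩, ⟨-, hst⟩, -⟩
      exact ⟨hs, hst trivial, ht⟩
    · rintro ⟨hs, hst, ht⟩
      exact ⟨⟨hs, hs.1.trans hst.le, ht⟩, ⟨fun h => h.elim, fun _ => hst⟩, fun h => h.elim,
        fun h => h.elim⟩
  have hSm : MeasurableSet S := hS ▸ (measurableSet_orderedCube _).preimage e.symm.measurable
  have hint : IntegrableOn (fun p => Ψ p.1 p.2) S := by
    rw [← hS]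
    exact (he.integrableOn_comp_preimage e.symm.measurableEmbedding).2 <| integrableOn_orderedCube
      (hΨ.comp ((measurable_pi_apply 0).prodMk (measurable_pi_apply 1))) hC
  have hinner (s : ℝ) : ∫ t, S.indicator (fun p => Ψ p.1 p.2) (s, t) =
      (Icc 0 1).indicator (fun s => ∫ t in s..1, Ψ s t) s := by
    by_cases hs : s ∈ Icc (0:ℝ) 1
    · have : (fun t => S.indicator (fun p => Ψ p.1 p.2) (s, t)) = (Ioc s 1).indicator (Ψ s) := by
        ext t
        simp [S, hs.1, hs.2, indicator]
      rw [this, integral_indicator measurableSet_Ioc, indicator_of_mem hs,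
        intervalIntegral.integral_of_le hs.2]
    · have hnot (t : ℝ) : (s, t) ∉ S := fun h => hs h.1
      simp [indicator_of_notMem (hnot _), indicator_of_notMem hs]
  calc ∫ y in orderedCube 2, Ψ (y 0) (y 1)
      = ∫ p in S, Ψ p.1 p.2 := by
        rw [← hS, ← he.setIntegral_preimage_emb e.symm.measurableEmbedding]
        rfl
    _ = ∫ s, ∫ t, S.indicator (fun p => Ψ p.1 p.2) (s, t) := by
        rw [← integral_indicator hSm, Measure.volume_eq_prod, integral_prod]
        exact (integrable_indicator_iff hSm).2 hint
    _ = ∫ s in (0:ℝ)..1, ∫ t in s..1, Ψ s t := by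
        simp_rw [hinner, integral_indicator measurableSet_Icc, integral_Icc_eq_integral_Ioc,
          intervalIntegral.integral_of_le zero_le_one]

lemma eqOn_zero_of_integral_sq_eq_zero {g : ℝ → ℝ} {a b : ℝ} (hab : a ≤ b)
    (hg : ContinuousOn g (Icc a b)) (h : ∫ x in a..b, g x ^ 2 = 0) : EqOn g 0 (Ioc a b) := by
  have hg2 : ContinuousOn (fun x => g x ^ 2) (Icc a b) := hg.pow 2
  rw [intervalIntegral.integral_eq_zero_iff_of_le_of_nonneg_ae hab
    (ae_of_all _ fun x => sq_nonneg (g x)) (hg2.intervalIntegrable_of_Icc hab)] at h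
  have := Measure.eqOn_Ioc_of_ae_eq volume h (hg2.mono Ioc_subset_Icc_self) continuousOn_const
  exact fun x hx => pow_eq_zero_iff two_ne_zero |>.1 (this hx)

section TailIntegral

variable {k : ℝ → ℝ}

lemma intervalIntegrable_of_abs_le (hk : Measurable k) {C : ℝ}
    (hC : ∀ x ∈ Icc (0:ℝ) 1, |k x| ≤ C) : IntervalIntegrable k volume 0 1 := by
  rw [intervalIntegrable_iff_integrableOn_Ioc_of_le zero_le_one]
  exact Measure.integrableOn_of_bounded (by simp) hk.aestronglyMeasurable
    ((ae_restrict_iff' measurableSet_Ioc).2 (ae_of_all _ fun x hx => hC x (Ioc_subset_Icc_self hx)))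

lemma absolutelyContinuousOnInterval_tailIntegral (hk : IntervalIntegrable k volume 0 1) :
    AbsolutelyContinuousOnInterval (fun s => ∫ t in s..1, k t) 0 1 := by
  simp_rw [intervalIntegral.integral_symm 1]
  exact (hk.absolutelyContinuousOnInterval_intervalIntegral (by simp)).neg

lemma ae_hasDerivAt_tailIntegral (hk : IntervalIntegrable k volume 0 1) :
    ∀ᵐ s, s ∈ Icc 0 1 → HasDerivAt (fun s => ∫ t in s..1, k t) (-k s) s := by
  filter_upwards [hk.ae_hasDerivAt_integral] with s hs hs01
  simp_rw [intervalIntegral.integral_symm 1]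
  exact (hs (by simpa using hs01) 1 (by simp)).neg

lemma integral_sq_tailIntegral (hk : IntervalIntegrable k volume 0 1) :
    ∫ s in (0:ℝ)..1, (∫ t in s..1, k t) ^ 2 = 2 * ∫ s in (0:ℝ)..1, s * k s * ∫ t in s..1, k t := by
  set K := fun s => ∫ t in s..1, k t with hKdef
  have hK : AbsolutelyContinuousOnInterval K 0 1 := absolutelyContinuousOnInterval_tailIntegral hk
  have hid : AbsolutelyContinuousOnInterval (fun s : ℝ => s) 0 1 :=
    (LipschitzWith.id.lipschitzOnWith (s := uIcc 0 1)).absolutelyContinuousOnInterval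
  -- integrate `(s K(s) K(s))' = K(s)² - 2 s k(s) K(s)` over `[0, 1]`
  have hparts := (hid.fun_mul hK).integral_deriv_mul_eq_sub hK
  have hae : ∀ᵐ s, s ∈ uIoc (0:ℝ) 1 →
      deriv (fun s => s * K s) s * K s + s * K s * deriv K s = K s ^ 2 - 2 * (s * k s * K s) := by
    filter_upwards [ae_hasDerivAt_tailIntegral hk] with s hs hs01
    have hd := hs (Ioc_subset_Icc_self (by simpa [uIoc_of_le] using hs01))
    rw [((hasDerivAt_id' s).fun_mul hd).deriv, hd.deriv]
    ring
  have hcont : ContinuousOn K (uIcc 0 1) := hK.continuousOn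
  rw [intervalIntegral.integral_congr_ae hae, intervalIntegral.integral_sub,
    intervalIntegral.integral_const_mul] at hparts
  · simp only [hKdef, intervalIntegral.integral_same, mul_zero, zero_mul, sub_self] at hparts
    linarith
  · exact (hcont.pow 2).intervalIntegrable
  · exact ((hk.continuousOn_mul continuousOn_id).mul_continuousOn hcont).const_mul 2

lemma integral_sq_tailIntegral_eq_setIntegral_orderedCube (hk : Measurable k) {C : ℝ}
    (hC : ∀ x ∈ Icc (0:ℝ) 1, |k x| ≤ C) :
    ∫ s in (0:ℝ)..1, (∫ t in s..1, k t) ^ 2 = 2 * ∫ x in orderedCube 3, k (x 1) * k (x 2) := by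
  have hky {n : ℕ} {y : Fin n → ℝ} (hy : y ∈ orderedCube n) (i : Fin n) : |k (y i)| ≤ C :=
    hC _ (hy.1 i)
  have hcube : ∫ x in orderedCube 3, k (x 1) * k (x 2) =
      ∫ y in orderedCube 2, y 0 * (k (y 0) * k (y 1)) := by
    refine setIntegral_orderedCube_comp_tail (Φ := fun y => k (y 0) * k (y 1)) (by fun_prop)
      (C := C * C) fun y hy => ?_
    rw [abs_mul]
    exact mul_le_mul (hky hy 0) (hky hy 1) (abs_nonneg _) ((abs_nonneg _).trans (hky hy 0))
  rw [integral_sq_tailIntegral (intervalIntegrable_of_abs_le hk hC), hcube]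
  simp_rw [← mul_assoc]
  rw [setIntegral_orderedCube_two (Ψ := fun s t => s * k s * k t) (by fun_prop) (C := 1 * C * C)
    fun y hy => ?_]
  · simp_rw [intervalIntegral.integral_const_mul]
  · have hy0 : |y 0| ≤ 1 := abs_le.2 ⟨by linarith [(hy.1 0).1], (hy.1 0).2⟩
    have h0 := hky hy 0
    have h1 := hky hy 1
    rw [abs_mul, abs_mul]
    gcongr
    linarith [abs_nonneg (k (y 0))]

lemma ae_eq_zero_of_integral_sq_tailIntegral_eq_zero (hk : IntervalIntegrable k volume 0 1)
    (h : ∫ s in (0:ℝ)..1, (∫ t in s..1, k t) ^ 2 = 0) :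
    ∀ᵐ s ∂volume.restrict (Icc 0 1), k s = 0 := by
  have hK := eqOn_zero_of_integral_sq_eq_zero zero_le_one
    (by simpa [uIcc_of_le] using (absolutelyContinuousOnInterval_tailIntegral hk).continuousOn) h
  rw [← Measure.restrict_congr_set Ioo_ae_eq_Icc, ae_restrict_iff' measurableSet_Ioo]
  filter_upwards [ae_hasDerivAt_tailIntegral hk] with s hd hs
  have hzero : (fun s => ∫ t in s..1, k t) =ᶠ[nhds s] fun _ => 0 :=
    Filter.eventually_of_mem (Ioo_mem_nhds hs.1 hs.2) fun x hx => hK (Ioo_subset_Ioc_self hx)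
  simpa using (hd (Ioo_subset_Icc_self hs)).unique
    ((hasDerivAt_const s 0).congr_of_eventuallyEq hzero)

end TailIntegral

/-- Constant functions are finitely forcible by words of length at most three. -/
theorem stmt13 (a : ℝ) (ha : a ∈ Set.Icc (0:ℝ) 1) (h : ℝ → ℝ) (hm : Measurable h)
    (hr : ∀ x ∈ Set.Icc (0:ℝ) 1, h x ∈ Set.Icc (0:ℝ) 1)
    (hyp : ∀ ℓ : ℕ, ℓ ≤ 3 → ∀ u : Fin ℓ → Bool,
      wordDensity u h = wordDensity u (fun _ => a)) :
    ∀ᵐ x ∂(volume.restrict (Set.Icc (0:ℝ) 1)), h x = a := by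
  have hbound (x : ℝ) (hx : x ∈ Icc (0:ℝ) 1) : |h x - a| ≤ 1 :=
    abs_sub_le_of_nonneg_of_le (hr x hx).1 (hr x hx).2 ha.1 ha.2
  have hsq : ∫ s in (0:ℝ)..1, (∫ t in s..1, h t - a) ^ 2 = 0 := by
    rw [integral_sq_tailIntegral_eq_setIntegral_orderedCube (hm.sub_const a) hbound,
      setIntegral_orderedCube_sub_mul_sub_eq_zero hm hr ha (hyp 3 le_rfl), mul_zero]
  filter_upwards [ae_eq_zero_of_integral_sq_tailIntegral_eq_zero
    (intervalIntegrable_of_abs_le (hm.sub_const a) hbound) hsq] with x hx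
  exact sub_eq_zero.1 hx
end

section
/- Let μ, ν be permutons (Borel probability measures on [0,1]² with uniform marginals) and τ a permutation of order k. Then |t(τ,μ) − t(τ,ν)| ≤ k² d_□(μ,ν). -/
open MeasureTheory

/-- A permuton: a Borel measure on `ℝ²` supported on `[0,1]²` with uniform marginals. -/
def IsPermuton (μ : Measure (ℝ × ℝ)) : Prop :=
  μ.map Prod.fst = volume.restrict (Set.Icc (0:ℝ) 1) ∧
  μ.map Prod.snd = volume.restrict (Set.Icc (0:ℝ) 1)

/-- The density `t(τ,μ)` of a pattern `τ ∈ 𝔖_k` in a permuton `μ`. -/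
noncomputable def permDensity {k : ℕ} (τ : Equiv.Perm (Fin k)) (μ : Measure (ℝ × ℝ)) : ℝ :=
  (Nat.factorial k : ℝ) *
    ((Measure.pi fun _ : Fin k => μ)
      {x | (∀ i j : Fin k, i < j → (x i).1 < (x j).1) ∧
           (∀ i j : Fin k, i < j → (x (τ⁻¹ i)).2 < (x (τ⁻¹ j)).2)}).toReal

/-- The rectangle (cut) distance between permutons. -/
noncomputable def permCutDist (μ ν : Measure (ℝ × ℝ)) : ℝ :=
  sSup {y | ∃ a b c d : ℝ, a ∈ Set.Icc (0:ℝ) 1 ∧ b ∈ Set.Icc (0:ℝ) 1 ∧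
    c ∈ Set.Icc (0:ℝ) 1 ∧ d ∈ Set.Icc (0:ℝ) 1 ∧
    y = |(μ (Set.Icc a b ×ˢ Set.Icc c d)).toReal - (ν (Set.Icc a b ×ˢ Set.Icc c d)).toReal|}

/-!
Replace the `k` independent samples from `ν` by samples from `μ` one coordinate at a time; each
swap changes the pattern probability by at most `d_□(μ, ν) / (k-1)!`. Indeed, once the other
`k - 1` points are fixed, the admissible positions of the swapped point form a rectangle
`S ×ˢ T` of intervals, on which `μ` and `ν` differ by at most `d_□(μ, ν)` (uniform marginals make
the endpoints negligible), and this rectangle is nonempty only if the fixed points have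
increasing first coordinates, an event of probability at most `1/(k-1)!`. Summing the `k` swaps
and multiplying by `k!` gives `k² d_□(μ, ν)`.
-/

open Set Filter
open scoped ENNReal Nat

namespace IsPermuton

variable {μ : Measure (ℝ × ℝ)}

lemma isProbabilityMeasure (h : IsPermuton μ) : IsProbabilityMeasure μ := by
  constructor
  simpa [Measure.map_apply measurable_fst MeasurableSet.univ] using
    congrArg (fun m : Measure ℝ => m univ) h.1

lemma quasiMeasurePreserving_fst (h : IsPermuton μ) :
    Measure.QuasiMeasurePreserving Prod.fst μ (volume.restrict (Icc (0 : ℝ) 1)) :=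
  ⟨measurable_fst, h.1.le.absolutelyContinuous⟩

lemma quasiMeasurePreserving_snd (h : IsPermuton μ) :
    Measure.QuasiMeasurePreserving Prod.snd μ (volume.restrict (Icc (0 : ℝ) 1)) :=
  ⟨measurable_snd, h.2.le.absolutelyContinuous⟩

lemma measure_prod_congr (h : IsPermuton μ) {S S' T T' : Set ℝ}
    (hS : S =ᵐ[volume.restrict (Icc (0 : ℝ) 1)] S')
    (hT : T =ᵐ[volume.restrict (Icc (0 : ℝ) 1)] T') :
    μ (S ×ˢ T) = μ (S' ×ˢ T') :=
  measure_congr <| (h.quasiMeasurePreserving_fst.preimage_ae_eq hS).inter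
    (h.quasiMeasurePreserving_snd.preimage_ae_eq hT)

end IsPermuton

lemma Set.OrdConnected.exists_ae_eq_Icc {S : Set ℝ} (hS : S.OrdConnected) :
    ∃ a ∈ Icc (0 : ℝ) 1, ∃ b ∈ Icc (0 : ℝ) 1,
      S =ᵐ[volume.restrict (Icc (0 : ℝ) 1)] Icc a b := by
  set S' := S ∩ Icc (0 : ℝ) 1
  have hSS' : S =ᵐ[volume.restrict (Icc (0 : ℝ) 1)] S' := by
    filter_upwards [ae_restrict_mem measurableSet_Icc] with x hx
    change (x ∈ S) = (x ∈ S ∩ _)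
    simp [hx]
  rcases S'.eq_empty_or_nonempty with hempty | hne
  · refine ⟨1, by simp, 0, by simp, ?_⟩
    rwa [Icc_eq_empty_of_lt one_pos, ← hempty]
  have hbdd : BddBelow S' ∧ BddAbove S' :=
    ⟨bddBelow_Icc.mono inter_subset_right, bddAbove_Icc.mono inter_subset_right⟩
  have hsub : S' ⊆ Icc (sInf S') (sSup S') := subset_Icc_csInf_csSup hbdd.1 hbdd.2
  have hIoo : Ioo (sInf S') (sSup S') ⊆ S' :=
    IsConnected.Ioo_csInf_csSup_subset ⟨hne, (hS.inter ordConnected_Icc).isPreconnected⟩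
      hbdd.1 hbdd.2
  have hS'Icc : S' =ᵐ[volume] Icc (sInf S') (sSup S') :=
    hsub.eventuallyLE.antisymm (Ioo_ae_eq_Icc.symm.le.trans hIoo.eventuallyLE)
  have hclosure : closure S' ⊆ Icc 0 1 := closure_minimal inter_subset_right isClosed_Icc
  exact ⟨sInf S', hclosure (csInf_mem_closure hne hbdd.1), sSup S',
    hclosure (csSup_mem_closure hne hbdd.2), hSS'.trans (ae_restrict_of_ae hS'Icc)⟩

lemma permCutDist_nonneg (μ ν : Measure (ℝ × ℝ)) : 0 ≤ permCutDist μ ν :=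
  Real.sSup_nonneg <| by
    rintro _ ⟨a, b, c, d, -, -, -, -, rfl⟩
    exact abs_nonneg _

lemma permCutDist_comm (μ ν : Measure (ℝ × ℝ)) : permCutDist μ ν = permCutDist ν μ := by
  simp only [permCutDist, abs_sub_comm]

lemma abs_sub_le_permCutDist {μ ν : Measure (ℝ × ℝ)} (hμ : IsPermuton μ) (hν : IsPermuton ν)
    {S T : Set ℝ} (hS : S.OrdConnected) (hT : T.OrdConnected) :
    |(μ (S ×ˢ T)).toReal - (ν (S ×ˢ T)).toReal| ≤ permCutDist μ ν := by
  have := hμ.isProbabilityMeasure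
  have := hν.isProbabilityMeasure
  have hbdd : BddAbove {y | ∃ a b c d : ℝ, a ∈ Icc (0 : ℝ) 1 ∧ b ∈ Icc (0 : ℝ) 1 ∧
      c ∈ Icc (0 : ℝ) 1 ∧ d ∈ Icc (0 : ℝ) 1 ∧
      y = |(μ (Icc a b ×ˢ Icc c d)).toReal - (ν (Icc a b ×ˢ Icc c d)).toReal|} := by
    refine ⟨1, ?_⟩
    rintro _ ⟨a, b, c, d, -, -, -, -, rfl⟩
    exact abs_sub_le_of_nonneg_of_le ENNReal.toReal_nonneg measureReal_le_one
      ENNReal.toReal_nonneg measureReal_le_one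
  obtain ⟨a, ha, b, hb, hSab⟩ := hS.exists_ae_eq_Icc
  obtain ⟨c, hc, d, hd, hTcd⟩ := hT.exists_ae_eq_Icc
  rw [hμ.measure_prod_congr hSab hTcd, hν.measure_prod_congr hSab hTcd]
  exact le_csSup hbdd ⟨a, b, c, d, ha, hb, hc, hd, rfl⟩

def increasingAlong {ι α β : Type*} [LT β] (r : ι → ι → Prop) (f : α → β) : Set (ι → α) :=
  {x | ∀ i j, r i j → f (x i) < f (x j)}

section Sorted

variable {β : Type*} [LinearOrder β] [TopologicalSpace β] [OrderClosedTopology β]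
  [SecondCountableTopology β] [MeasurableSpace β] [OpensMeasurableSpace β]

lemma measurableSet_increasingAlong {ι α : Type*} [Countable ι] [MeasurableSpace α]
    (r : ι → ι → Prop) {f : α → β} (hf : Measurable f) :
    MeasurableSet (increasingAlong r f) := by
  simp only [increasingAlong, ofPred_forall]
  exact .iInter fun i => .iInter fun j => .iInter fun _ =>
    measurableSet_lt (hf.comp (measurable_pi_apply i)) (hf.comp (measurable_pi_apply j))

lemma measure_pi_setOf_strictMono_le {n : ℕ} (m : Measure β) [IsProbabilityMeasure m] :
    Measure.pi (fun _ : Fin n => m) {x | StrictMono x} ≤ (n ! : ℝ≥0∞)⁻¹ := by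
  set S := {x : Fin n → β | StrictMono x}
  have hS : MeasurableSet S := measurableSet_increasingAlong (· < ·) measurable_id
  let A : Equiv.Perm (Fin n) → Set (Fin n → β) := fun σ => (· ∘ σ) ⁻¹' S
  have hA_meas : ∀ σ, MeasurableSet (A σ) := fun σ => hS.preimage (by fun_prop)
  have hA_measure : ∀ σ, Measure.pi (fun _ => m) (A σ) = Measure.pi (fun _ => m) S := fun σ =>
    (measurePreserving_arrowCongr' (fun _ => m) (fun _ => m) σ.symm (MeasurableEquiv.refl β)
      fun _ => .id m).measure_preimage hS.nullMeasurableSet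
  -- each point with pairwise distinct coordinates is sorted by exactly one permutation
  have hA_disj : Pairwise (Function.onFun Disjoint A) := by
    intro σ σ' hne
    refine disjoint_left.2 fun x hσ hσ' => hne ?_
    have hsort : ∀ ρ : Equiv.Perm (Fin n), StrictMono (x ∘ ρ) → ρ = Tuple.sort x := fun ρ h =>
      Tuple.eq_sort_iff.2 ⟨h.monotone, fun i j hij hx => absurd hx (h hij).ne⟩
    exact (hsort σ hσ).trans (hsort σ' hσ').symm
  rw [ENNReal.le_inv_iff_mul_le, mul_comm]
  calc (n ! : ℝ≥0∞) * Measure.pi (fun _ => m) S = ∑ σ, Measure.pi (fun _ => m) (A σ) := by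
        simp [hA_measure, Fintype.card_perm]
    _ = Measure.pi (fun _ => m) (⋃ σ, A σ) := by
        rw [measure_iUnion hA_disj hA_meas, tsum_fintype]
    _ ≤ 1 := prob_le_one

end Sorted

lemma IsPermuton.measure_pi_setOf_strictMono_fst_le {n : ℕ} {P : Fin n → Measure (ℝ × ℝ)}
    (hP : ∀ i, IsPermuton (P i)) :
    Measure.pi P {y | StrictMono fun l => (y l).1} ≤ (n ! : ℝ≥0∞)⁻¹ := by
  have := fun i => (hP i).isProbabilityMeasure
  have : IsProbabilityMeasure (volume.restrict (Icc (0 : ℝ) 1)) := ⟨by simp⟩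
  have hfst := measurePreserving_pi P (fun _ => volume.restrict (Icc (0 : ℝ) 1))
    fun i => ⟨measurable_fst, (hP i).1⟩
  exact (hfst.measure_preimage
    (measurableSet_increasingAlong (· < ·) measurable_id).nullMeasurableSet).trans_le
    (measure_pi_setOf_strictMono_le _)

lemma MeasureTheory.Measure.pi_apply_eq_lintegral_insertNth {α : Type*} [MeasurableSpace α]
    {n : ℕ} (P : Fin (n + 1) → Measure α) [∀ i, SigmaFinite (P i)] (j : Fin (n + 1))
    {A : Set (Fin (n + 1) → α)} (hA : MeasurableSet A) :
    Measure.pi P A =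
      ∫⁻ y, P j {z | j.insertNth z y ∈ A} ∂Measure.pi fun l => P (j.succAbove l) := by
  set e := MeasurableEquiv.piFinSuccAbove (fun _ => α) j
  have h := (measurePreserving_piFinSuccAbove P j).measure_preimage_equiv (e.symm ⁻¹' A)
  rw [← preimage_comp, e.symm_comp_self, preimage_id] at h
  rw [h, Measure.prod_apply_symm (e.symm.measurable hA)]
  rfl

lemma MeasureTheory.Measure.pi_update_le_add {α : Type*} [MeasurableSpace α] {n : ℕ}
    (P : Fin (n + 1) → Measure α) [∀ i, SigmaFinite (P i)] (j : Fin (n + 1))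
    (μ ν : Measure α) [SigmaFinite μ] [SigmaFinite ν] {A : Set (Fin (n + 1) → α)}
    (hA : MeasurableSet A) {B : Set (Fin n → α)} (hB : MeasurableSet B) (c : ℝ≥0∞)
    (h : ∀ y, μ {z | j.insertNth z y ∈ A} ≤
      ν {z | j.insertNth z y ∈ A} + B.indicator (fun _ => c) y) :
    Measure.pi (Function.update P j μ) A ≤
      Measure.pi (Function.update P j ν) A + c * Measure.pi (fun l => P (j.succAbove l)) B := by
  have hσ (m : Measure α) [SigmaFinite m] (i : Fin (n + 1)) :
      SigmaFinite (Function.update P j m i) := by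
    rcases eq_or_ne i j with rfl | hi
    · rwa [Function.update_self]
    · rw [Function.update_of_ne hi]; infer_instance
  have hrest (m : Measure α) : (fun l => Function.update P j m (j.succAbove l)) =
      fun l => P (j.succAbove l) :=
    funext fun l => Function.update_of_ne (j.succAbove_ne l) _ _
  have := hσ μ
  have := hσ ν
  rw [pi_apply_eq_lintegral_insertNth _ j hA, pi_apply_eq_lintegral_insertNth _ j hA,
    hrest, hrest, Function.update_self, Function.update_self, ← lintegral_indicator_const hB,
    ← lintegral_add_right _ (measurable_const.indicator hB)]
  exact lintegral_mono h

section Insertion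

variable {α β : Type*} {n : ℕ}

def insertionGap [LT β] (r : Fin (n + 1) → Fin (n + 1) → Prop) (f : α → β) (j : Fin (n + 1))
    (y : Fin n → α) : Set β :=
  {t | ∀ l, (r (j.succAbove l) j → f (y l) < t) ∧ (r j (j.succAbove l) → t < f (y l))}

lemma ordConnected_insertionGap [Preorder β] (r : Fin (n + 1) → Fin (n + 1) → Prop)
    (f : α → β) (j : Fin (n + 1)) (y : Fin n → α) : (insertionGap r f j y).OrdConnected :=
  ⟨fun _ h₁ _ h₂ _ ht l =>
    ⟨fun hl => ((h₁ l).1 hl).trans_le ht.1, fun hl => ht.2.trans_lt ((h₂ l).2 hl)⟩⟩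

lemma insertNth_mem_increasingAlong_iff [Preorder β] {r : Fin (n + 1) → Fin (n + 1) → Prop}
    (hr : ∀ i, ¬r i i) (f : α → β) (j : Fin (n + 1)) (z : α) (y : Fin n → α) :
    j.insertNth z y ∈ increasingAlong r f ↔
      y ∈ increasingAlong (fun l m => r (j.succAbove l) (j.succAbove m)) f ∧
        f z ∈ insertionGap r f j y := by
  simp only [increasingAlong, insertionGap, mem_ofPred_eq, Fin.forall_iff_succAbove j,
    Fin.insertNth_apply_same, Fin.insertNth_apply_succAbove, hr j, false_imp_iff, true_and,
    forall_and]
  tauto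

end Insertion

def patternSet {k : ℕ} (τ : Equiv.Perm (Fin k)) : Set (Fin k → ℝ × ℝ) :=
  increasingAlong (· < ·) Prod.fst ∩ increasingAlong (fun i j => τ i < τ j) Prod.snd

lemma measurableSet_patternSet {k : ℕ} (τ : Equiv.Perm (Fin k)) :
    MeasurableSet (patternSet τ) :=
  (measurableSet_increasingAlong _ measurable_fst).inter
    (measurableSet_increasingAlong _ measurable_snd)

lemma permDensity_eq {k : ℕ} (τ : Equiv.Perm (Fin k)) (μ : Measure (ℝ × ℝ)) :
    permDensity τ μ = k ! * (Measure.pi (fun _ : Fin k => μ) (patternSet τ)).toReal := by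
  have hτ (x : Fin k → ℝ × ℝ) : (∀ i j, i < j → (x (τ⁻¹ i)).2 < (x (τ⁻¹ j)).2) ↔
      ∀ i j, τ i < τ j → (x i).2 < (x j).2 :=
    ⟨fun h i j hij => by simpa using h _ _ hij, fun h i j hij => h _ _ (by simpa using hij)⟩
  simp only [permDensity, patternSet, increasingAlong, hτ]
  rfl

lemma insertNth_mem_patternSet_iff {n : ℕ} (τ : Equiv.Perm (Fin (n + 1))) (j : Fin (n + 1))
    (z : ℝ × ℝ) (y : Fin n → ℝ × ℝ) :
    j.insertNth z y ∈ patternSet τ ↔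
      y ∈ increasingAlong (· < ·) Prod.fst ∩
          increasingAlong (fun l m => τ (j.succAbove l) < τ (j.succAbove m)) Prod.snd ∧
        z ∈ insertionGap (· < ·) Prod.fst j y ×ˢ
          insertionGap (fun i i' => τ i < τ i') Prod.snd j y := by
  simp only [patternSet, mem_inter_iff, mem_prod,
    insertNth_mem_increasingAlong_iff (r := (· < ·)) lt_irrefl,
    insertNth_mem_increasingAlong_iff (r := fun i i' => τ i < τ i') (fun i => lt_irrefl (τ i)),
    Fin.succAbove_lt_succAbove_iff]
  tauto

lemma measure_pi_update_patternSet_le {n : ℕ} (τ : Equiv.Perm (Fin (n + 1)))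
    {P : Fin (n + 1) → Measure (ℝ × ℝ)} (hP : ∀ i, IsPermuton (P i)) (j : Fin (n + 1))
    {μ ν : Measure (ℝ × ℝ)} (hμ : IsPermuton μ) (hν : IsPermuton ν) :
    (Measure.pi (Function.update P j μ) (patternSet τ)).toReal ≤
      (Measure.pi (Function.update P j ν) (patternSet τ)).toReal + permCutDist μ ν / n ! := by
  have := fun i => (hP i).isProbabilityMeasure
  have := hμ.isProbabilityMeasure
  have := hν.isProbabilityMeasure
  have hPν : ∀ i, IsPermuton (Function.update P j ν i) :=
    (Function.forall_update_iff P (a := j) fun _ m => IsPermuton m).2 ⟨hν, fun i _ => hP i⟩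
  have := fun i => (hPν i).isProbabilityMeasure
  set d := permCutDist μ ν
  set B : Set (Fin n → ℝ × ℝ) := increasingAlong (· < ·) Prod.fst ∩
    increasingAlong (fun l m => τ (j.succAbove l) < τ (j.succAbove m)) Prod.snd with hB_def
  have hB : MeasurableSet B :=
    (measurableSet_increasingAlong _ measurable_fst).inter
      (measurableSet_increasingAlong _ measurable_snd)
  have hslice (y : Fin n → ℝ × ℝ) :
      μ {z | j.insertNth z y ∈ patternSet τ} ≤
        ν {z | j.insertNth z y ∈ patternSet τ} + B.indicator (fun _ => ENNReal.ofReal d) y := by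
    simp only [insertNth_mem_patternSet_iff, ← hB_def]
    by_cases hy : y ∈ B
    · simp only [hy, true_and, ofPred_mem_eq, indicator_of_mem]
      rw [← ENNReal.toReal_le_toReal (measure_ne_top _ _) (by finiteness),
        ENNReal.toReal_add (measure_ne_top _ _) ENNReal.ofReal_ne_top,
        ENNReal.toReal_ofReal (permCutDist_nonneg μ ν)]
      linarith [(abs_sub_le_iff.1 (abs_sub_le_permCutDist hμ hν
        (ordConnected_insertionGap (· < ·) Prod.fst j y)
        (ordConnected_insertionGap (fun i i' => τ i < τ i') Prod.snd j y))).1]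
    · simp only [hy, false_and, ofPred_false, measure_empty, zero_le]
  have hB_le : Measure.pi (fun l => P (j.succAbove l)) B ≤ (n ! : ℝ≥0∞)⁻¹ :=
    (measure_mono inter_subset_left).trans
      (IsPermuton.measure_pi_setOf_strictMono_fst_le fun l => hP _)
  calc (Measure.pi (Function.update P j μ) (patternSet τ)).toReal
      ≤ (Measure.pi (Function.update P j ν) (patternSet τ)).toReal +
          (ENNReal.ofReal d * Measure.pi (fun l => P (j.succAbove l)) B).toReal :=
        ENNReal.toReal_le_add (Measure.pi_update_le_add P j μ ν (measurableSet_patternSet τ) hB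
          _ hslice) (measure_ne_top _ _) (by finiteness)
    _ ≤ (Measure.pi (Function.update P j ν) (patternSet τ)).toReal + d / n ! := by
        rw [ENNReal.toReal_mul, ENNReal.toReal_ofReal (permCutDist_nonneg μ ν), div_eq_mul_inv]
        gcongr
        · exact permCutDist_nonneg μ ν
        · simpa using ENNReal.toReal_mono (by finiteness) hB_le

lemma abs_sub_measure_pi_update_patternSet_le {k : ℕ} (τ : Equiv.Perm (Fin k))
    {P : Fin k → Measure (ℝ × ℝ)} (hP : ∀ i, IsPermuton (P i)) (j : Fin k)
    {μ ν : Measure (ℝ × ℝ)} (hμ : IsPermuton μ) (hν : IsPermuton ν) :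
    |(Measure.pi (Function.update P j μ) (patternSet τ)).toReal -
        (Measure.pi (Function.update P j ν) (patternSet τ)).toReal| ≤
      k * permCutDist μ ν / k ! := by
  obtain ⟨n, rfl⟩ := Nat.exists_eq_succ_of_ne_zero j.pos.ne'
  have hfac : ((n + 1 : ℕ) : ℝ) * permCutDist μ ν / (n + 1)! = permCutDist μ ν / n ! := by
    rw [Nat.factorial_succ]
    push_cast
    field_simp
  rw [hfac, abs_sub_le_iff]
  constructor
  · linarith [measure_pi_update_patternSet_le τ hP j hμ hν]
  · have := measure_pi_update_patternSet_le τ hP j hν hμ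
    rw [permCutDist_comm] at this
    linarith

lemma abs_sub_le_of_forall_update {β : Type*} {k : ℕ} (F : (Fin k → β) → ℝ) {s : Set β}
    {a b : β} (ha : a ∈ s) (hb : b ∈ s) {c : ℝ}
    (h : ∀ x : Fin k → β, (∀ i, x i ∈ s) → ∀ j, |F (Function.update x j a) -
      F (Function.update x j b)| ≤ c) :
    |F (fun _ => a) - F (fun _ => b)| ≤ k * c := by
  let g : ℕ → Fin k → β := fun m i => if (i : ℕ) < m then a else b
  have hg_mem (m : ℕ) (i : Fin k) : g m i ∈ s := by
    by_cases hi : (i : ℕ) < m <;> simp [g, hi, ha, hb]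
  have hg_succ (m : ℕ) (hm : m < k) :
      g (m + 1) = Function.update (g m) ⟨m, hm⟩ a ∧ g m = Function.update (g m) ⟨m, hm⟩ b := by
    constructor <;> ext i <;> rcases eq_or_ne i ⟨m, hm⟩ with rfl | hi
    all_goals simp_all [g, Fin.ext_iff, le_iff_lt_or_eq]
  have hg_step (m : ℕ) (hm : m ∈ Finset.range k) : |F (g (m + 1)) - F (g m)| ≤ c := by
    obtain ⟨h₁, h₂⟩ := hg_succ m (Finset.mem_range.1 hm)
    have := h _ (hg_mem m) ⟨m, Finset.mem_range.1 hm⟩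
    rwa [← h₁, ← h₂] at this
  calc |F (fun _ => a) - F (fun _ => b)| = |F (g k) - F (g 0)| := by
        congr; ext i; simp [g]
    _ = |∑ m ∈ Finset.range k, (F (g (m + 1)) - F (g m))| := by
        rw [Finset.sum_range_sub (fun m => F (g m))]
    _ ≤ ∑ m ∈ Finset.range k, |F (g (m + 1)) - F (g m)| := Finset.abs_sum_le_sum_abs _ _
    _ ≤ ∑ _m ∈ Finset.range k, c := Finset.sum_le_sum hg_step
    _ = k * c := by simp

theorem stmt14 {k : ℕ} (τ : Equiv.Perm (Fin k)) (μ ν : Measure (ℝ × ℝ))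
    (hμ : IsPermuton μ) (hν : IsPermuton ν) :
    |permDensity τ μ - permDensity τ ν| ≤ (k : ℝ) ^ 2 * permCutDist μ ν := by
  have hpattern := abs_sub_le_of_forall_update
    (fun P => (Measure.pi P (patternSet τ)).toReal) (s := {m | IsPermuton m}) hμ hν
    fun P hP j => abs_sub_measure_pi_update_patternSet_le τ hP j hμ hν
  rw [permDensity_eq, permDensity_eq, ← mul_sub, abs_mul, Nat.abs_cast]
  calc (k ! : ℝ) * |(Measure.pi (fun _ => μ) (patternSet τ)).toReal -
        (Measure.pi (fun _ => ν) (patternSet τ)).toReal|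
      ≤ k ! * (k * (k * permCutDist μ ν / k !)) := by gcongr
    _ = (k : ℝ) ^ 2 * permCutDist μ ν := by
        field_simp
end

section
/- Let μ be a permuton and i, j ∈ ℕ. Then ∫_{[0,1]²} x^i y^j dμ(x,y) can be written as a finite nonnegative linear combination of permutation densities: there exist a set S_{i,j} of permutations of order i+j+1 and positive constants C_τ such that ∫ x^i y^j dμ = ∑_{τ∈S_{i,j}} C_τ t(τ,μ). Consequently, if two permutons μ, ν satisfy t(τ,μ) = t(τ,ν) for all finite permutations τ, then μ = ν. -/
open MeasureTheory

/-! Sample `k = i + j + 1` points independently from a permuton `μ`. Conditionally on point `0`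
being `(x, y)`, the probability that points `1, …, i` lie to its left and points
`i + 1, …, i + j` lie below it is `x ^ i * y ^ j`, so `∫ x ^ i * y ^ j ∂μ` is the probability
of this event. The marginals have no atoms, so almost surely no two points share a coordinate,
and the event is then a disjoint union of cells, each fixing the left-to-right order `σ` and the
bottom-to-top order `ρ` of the points. By exchangeability the cell `(σ, ρ)` has probability
`t(ρ⁻¹ σ, μ) / k!`.

Hence pattern densities determine all moments, and by Stone–Weierstrass moments determine a
finite measure supported on the compact square `[0,1]²`. -/

section CompactSupport

variable {E : Type*} [TopologicalSpace E] [MeasurableSpace E] {K : Set E} {μ : Measure E}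

theorem integrable_of_ae_mem_isCompact [OpensMeasurableSpace E] [IsFiniteMeasure μ]
    (hK : IsCompact K) (hμK : ∀ᵐ x ∂μ, x ∈ K) {f : E → ℝ} (hf : Continuous f) :
    Integrable f μ := by
  obtain ⟨C, hC⟩ := hK.exists_bound_of_continuousOn hf.continuousOn
  exact .of_bound hf.aestronglyMeasurable C (by filter_upwards [hμK] using hC)

theorem dist_integral_le_of_ae_mem [OpensMeasurableSpace E] [IsFiniteMeasure μ]
    (hK : IsCompact K) (hμK : ∀ᵐ x ∂μ, x ∈ K) {f g : E → ℝ} (hf : Continuous f)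
    (hg : Continuous g) {δ : ℝ} (hfg : ∀ x ∈ K, ‖g x - f x‖ ≤ δ) :
    dist (∫ x, f x ∂μ) (∫ x, g x ∂μ) ≤ δ * μ.real Set.univ := by
  rw [dist_comm, dist_eq_norm, ← integral_sub (integrable_of_ae_mem_isCompact hK hμK hg)
    (integrable_of_ae_mem_isCompact hK hμK hf)]
  refine norm_integral_le_of_norm_le_const ?_
  filter_upwards [hμK] with x hx using hfg x hx

theorem ext_of_integral_eq_of_separatesPoints [HasOuterApproxClosed E] [BorelSpace E]
    {ν : Measure E} [IsFiniteMeasure μ] [IsFiniteMeasure ν] (hK : IsCompact K)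
    (hμK : ∀ᵐ x ∂μ, x ∈ K) (hνK : ∀ᵐ x ∂ν, x ∈ K) {A : Subalgebra ℝ C(E, ℝ)}
    (hA : A.SeparatesPoints) (heq : ∀ g ∈ A, ∫ x, g x ∂μ = ∫ x, g x ∂ν) : μ = ν := by
  refine ext_of_forall_integral_eq_of_IsFiniteMeasure fun f => ?_
  set M := μ.real Set.univ + ν.real Set.univ
  have key : ∀ δ > 0, dist (∫ x, f x ∂μ) (∫ x, f x ∂ν) ≤ δ * M := fun δ hδ => by
    obtain ⟨g, hgA, hg⟩ :=
      ContinuousMap.exists_mem_subalgebra_near_continuous_of_isCompact_of_separatesPoints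
        hA f.toContinuousMap hK hδ
    replace hg : ∀ x ∈ K, ‖g x - f x‖ ≤ δ := fun x hx => (hg x hx).le
    calc dist (∫ x, f x ∂μ) (∫ x, f x ∂ν)
        ≤ dist (∫ x, f x ∂μ) (∫ x, g x ∂μ) + dist (∫ x, f x ∂ν) (∫ x, g x ∂ν) := by
          rw [heq g hgA, dist_comm (∫ x, f x ∂ν)]; exact dist_triangle _ _ _
      _ ≤ δ * μ.real Set.univ + δ * ν.real Set.univ :=
          add_le_add (dist_integral_le_of_ae_mem hK hμK f.continuous g.continuous hg)
            (dist_integral_le_of_ae_mem hK hνK f.continuous g.continuous hg)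
      _ = δ * M := by ring
  refine eq_of_forall_dist_le fun ε hε => (key (ε / (M + 1)) (by positivity)).trans ?_
  rw [div_mul_eq_mul_div, div_le_iff₀ (by positivity)]
  nlinarith

end CompactSupport

section Moments

variable {μ ν : Measure (ℝ × ℝ)}

theorem pow_mul_pow_of_mem_closure {g : C(ℝ × ℝ, ℝ)}
    (hg : g ∈ Submonoid.closure {ContinuousMap.fst, ContinuousMap.snd}) :
    ∃ a b : ℕ, g = ContinuousMap.fst ^ a * ContinuousMap.snd ^ b := by
  induction hg using Submonoid.closure_induction with
  | mem g hg =>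
    rcases hg with rfl | rfl
    exacts [⟨1, 0, by ring⟩, ⟨0, 1, by ring⟩]
  | one => exact ⟨0, 0, by ring⟩
  | mul g g' _ _ ihg ihg' =>
    obtain ⟨a, b, rfl⟩ := ihg
    obtain ⟨a', b', rfl⟩ := ihg'
    exact ⟨a + a', b + b', by ring⟩

theorem separatesPoints_adjoin_fst_snd :
    (Algebra.adjoin ℝ {ContinuousMap.fst, ContinuousMap.snd} :
      Subalgebra ℝ C(ℝ × ℝ, ℝ)).SeparatesPoints := by
  intro p q hpq
  by_cases h1 : p.1 = q.1
  · exact ⟨_, ⟨ContinuousMap.snd, Algebra.subset_adjoin (by simp), rfl⟩,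
      fun h2 => hpq (Prod.ext h1 h2)⟩
  · exact ⟨_, ⟨ContinuousMap.fst, Algebra.subset_adjoin (by simp), rfl⟩, h1⟩

theorem ext_of_integral_pow_mul_pow_eq {K : Set (ℝ × ℝ)} (hK : IsCompact K)
    [IsFiniteMeasure μ] [IsFiniteMeasure ν] (hμK : ∀ᵐ p ∂μ, p ∈ K) (hνK : ∀ᵐ p ∂ν, p ∈ K)
    (hmom : ∀ a b : ℕ, ∫ p, p.1 ^ a * p.2 ^ b ∂μ = ∫ p, p.1 ^ a * p.2 ^ b ∂ν) : μ = ν := by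
  refine ext_of_integral_eq_of_separatesPoints hK hμK hνK separatesPoints_adjoin_fst_snd
    fun g hg => ?_
  replace hg : g ∈ Submodule.span ℝ
      (Submonoid.closure ({ContinuousMap.fst, ContinuousMap.snd} : Set C(ℝ × ℝ, ℝ))) := by
    rwa [← Algebra.adjoin_eq_span]
  induction hg using Submodule.span_induction with
  | mem g hg =>
    obtain ⟨a, b, rfl⟩ := pow_mul_pow_of_mem_closure hg
    exact hmom a b
  | zero => simp
  | add g g' _ _ ihg ihg' =>
    simp only [ContinuousMap.add_apply]
    rw [integral_add (integrable_of_ae_mem_isCompact hK hμK g.continuous)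
        (integrable_of_ae_mem_isCompact hK hμK g'.continuous),
      integral_add (integrable_of_ae_mem_isCompact hK hνK g.continuous)
        (integrable_of_ae_mem_isCompact hK hνK g'.continuous), ihg, ihg']
  | smul c g _ ihg =>
    simp only [ContinuousMap.smul_apply, smul_eq_mul, integral_const_mul, ihg]

end Moments

section UniformMarginal

variable {α : Type*} [MeasurableSpace α] {μ : Measure α} {f : α → ℝ}

theorem measure_preimage_of_map_eq_uniform (hf : Measurable f)
    (h : μ.map f = volume.restrict (Set.Icc 0 1)) {s : Set ℝ} (hs : MeasurableSet s) :
    μ (f ⁻¹' s) = volume (s ∩ Set.Icc 0 1) := by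
  rw [← Measure.map_apply hf hs, h, Measure.restrict_apply hs]

theorem isProbabilityMeasure_of_map_eq_uniform (hf : Measurable f)
    (h : μ.map f = volume.restrict (Set.Icc 0 1)) : IsProbabilityMeasure μ :=
  ⟨by simpa using measure_preimage_of_map_eq_uniform hf h MeasurableSet.univ⟩

theorem ae_mem_Icc_of_map_eq_uniform (hf : Measurable f)
    (h : μ.map f = volume.restrict (Set.Icc 0 1)) : ∀ᵐ a ∂μ, f a ∈ Set.Icc (0 : ℝ) 1 := by
  rw [ae_iff]
  change μ (f ⁻¹' (Set.Icc 0 1)ᶜ) = 0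
  rw [measure_preimage_of_map_eq_uniform hf h measurableSet_Icc.compl, Set.compl_inter_self,
    measure_empty]

theorem measure_lt_of_map_eq_uniform (hf : Measurable f)
    (h : μ.map f = volume.restrict (Set.Icc 0 1)) {x : ℝ} (hx : x ∈ Set.Icc (0 : ℝ) 1) :
    μ {a | f a < x} = ENNReal.ofReal x := by
  have hIio : Set.Iio x ∩ Set.Icc 0 1 = Set.Ico 0 x := by
    ext t
    simp only [Set.mem_inter_iff, Set.mem_Iio, Set.mem_Icc, Set.mem_Ico]
    constructor
    · rintro ⟨htx, ht0, -⟩; exact ⟨ht0, htx⟩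
    · rintro ⟨ht0, htx⟩; exact ⟨htx, ht0, by linarith [hx.2]⟩
  rw [← sub_zero x, ← Real.volume_Ico, ← hIio, sub_zero]
  exact measure_preimage_of_map_eq_uniform hf h measurableSet_Iio

theorem measure_eq_of_map_eq_uniform (hf : Measurable f)
    (h : μ.map f = volume.restrict (Set.Icc 0 1)) (x : ℝ) : μ {a | f a = x} = 0 :=
  (measure_preimage_of_map_eq_uniform hf h (measurableSet_singleton x)).trans
    (measure_mono_null Set.inter_subset_left Real.volume_singleton)

end UniformMarginal

section Permuton

variable {μ : Measure (ℝ × ℝ)}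

theorem IsPermuton.isProbabilityMeasure_s15 (h : IsPermuton μ) : IsProbabilityMeasure μ :=
  isProbabilityMeasure_of_map_eq_uniform measurable_fst h.1

theorem IsPermuton.ae_mem_Icc (h : IsPermuton μ) :
    ∀ᵐ p ∂μ, p ∈ Set.Icc (0 : ℝ) 1 ×ˢ Set.Icc (0 : ℝ) 1 := by
  filter_upwards [ae_mem_Icc_of_map_eq_uniform measurable_fst h.1,
    ae_mem_Icc_of_map_eq_uniform measurable_snd h.2] with p hp1 hp2 using ⟨hp1, hp2⟩

end Permuton

section Pi

variable {α : Type*} [MeasurableSpace α] (μ : Measure α) [SigmaFinite μ] {n : ℕ}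

theorem pi_preimage_piFinSuccAbove (a : Fin (n + 1)) {s : Set (α × (Fin n → α))}
    (hs : MeasurableSet s) :
    Measure.pi (fun _ => μ) (MeasurableEquiv.piFinSuccAbove (fun _ => α) a ⁻¹' s) =
      ∫⁻ x, Measure.pi (fun _ => μ) (Prod.mk x ⁻¹' s) ∂μ := by
  rw [(measurePreserving_piFinSuccAbove (fun _ => μ) a).measure_preimage hs.nullMeasurableSet,
    Measure.prod_apply hs]

variable {μ}

theorem ae_pi_apply_ne {f : α → ℝ} (hf : Measurable f) (h0 : ∀ x, μ {a | f a = x} = 0)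
    {a b : Fin (n + 1)} (hab : a ≠ b) :
    ∀ᵐ z ∂Measure.pi (fun _ => μ), f (z a) ≠ f (z b) := by
  obtain ⟨c, rfl⟩ := Fin.exists_succAbove_eq hab.symm
  have hs : MeasurableSet {p : α × (Fin n → α) | f p.1 = f (p.2 c)} :=
    measurableSet_eq_fun (hf.comp measurable_fst)
      (hf.comp ((measurable_pi_apply c).comp measurable_snd))
  have hsection : ∀ x, Measure.pi (fun _ => μ) (Prod.mk x ⁻¹' {p | f p.1 = f (p.2 c)}) = 0 :=
    fun x => measure_mono_null (t := Function.eval c ⁻¹' {y | f y = f x})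
      (fun (w : Fin n → α) hw => (hw : f x = f (w c)).symm)
      (Measure.pi_eval_preimage_null _ (h0 (f x)))
  rw [ae_iff]
  simp only [ne_eq, not_not]
  change Measure.pi _ (MeasurableEquiv.piFinSuccAbove (fun _ => α) a ⁻¹'
    {p : α × (Fin n → α) | f p.1 = f (p.2 c)}) = 0
  rw [pi_preimage_piFinSuccAbove μ a hs]
  simp only [hsection, lintegral_zero]

theorem ae_pi_injective {f : α → ℝ} (hf : Measurable f) (h0 : ∀ x, μ {a | f a = x} = 0) :
    ∀ᵐ z ∂Measure.pi (fun _ : Fin (n + 1) => μ), Function.Injective (fun a => f (z a)) := by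
  have : ∀ᵐ z ∂Measure.pi (fun _ : Fin (n + 1) => μ), ∀ a b, a ≠ b → f (z a) ≠ f (z b) := by
    simp only [ae_all_iff]
    intro a b
    by_cases hab : a = b
    · simp [hab]
    · simpa [hab] using ae_pi_apply_ne hf h0 hab
  filter_upwards [this] with z hz a b hab
  by_contra hne
  exact hz a b hne hab

end Pi

section TupleSort

variable {α : Type*} [LinearOrder α] {n : ℕ} {f : Fin n → α} {σ : Equiv.Perm (Fin n)}

theorem Tuple.eq_sort_of_strictMono (h : StrictMono (f ∘ σ)) : σ = Tuple.sort f :=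
  Tuple.eq_sort_iff.2 ⟨h.monotone, fun _ _ hab hf => absurd hf (h hab).ne⟩

theorem Function.Injective.of_strictMono_comp_perm (h : StrictMono (f ∘ σ)) :
    Function.Injective f := by
  simpa [Function.comp_assoc] using h.injective.comp σ.symm.injective

theorem StrictMono.lt_iff_perm_inv_lt (h : StrictMono (f ∘ σ)) {a b : Fin n} :
    f a < f b ↔ σ⁻¹ a < σ⁻¹ b := by
  simpa using h.lt_iff_lt (a := σ⁻¹ a) (b := σ⁻¹ b)

end TupleSort

section Cells

variable {n : ℕ}

def cell (σ ρ : Equiv.Perm (Fin n)) : Set (Fin n → ℝ × ℝ) :=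
  {z | StrictMono (fun a => (z (σ a)).1) ∧ StrictMono (fun a => (z (ρ a)).2)}

theorem permDensity_eq_cell (τ : Equiv.Perm (Fin n)) (μ : Measure (ℝ × ℝ)) :
    permDensity τ μ = n.factorial * (Measure.pi (fun _ => μ) (cell 1 τ⁻¹)).toReal :=
  rfl

theorem measurableSet_cell (σ ρ : Equiv.Perm (Fin n)) : MeasurableSet (cell σ ρ) := by
  simp only [cell, StrictMono, Set.ofPred_and, Set.ofPred_forall]
  refine .inter (.iInter fun a => .iInter fun b => .iInter fun _ => ?_)
    (.iInter fun a => .iInter fun b => .iInter fun _ => ?_)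
  · exact measurableSet_lt (measurable_pi_apply _).fst (measurable_pi_apply _).fst
  · exact measurableSet_lt (measurable_pi_apply _).snd (measurable_pi_apply _).snd

theorem pi_cell (μ : Measure (ℝ × ℝ)) [SigmaFinite μ] (σ ρ : Equiv.Perm (Fin n)) :
    Measure.pi (fun _ => μ) (cell σ ρ) = Measure.pi (fun _ => μ) (cell 1 (σ⁻¹ * ρ)) := by
  have hσ := measurePreserving_arrowCongr' (fun _ => μ) (fun _ => μ) σ.symm
    (MeasurableEquiv.refl _) fun _ => MeasurePreserving.id μ
  rw [← hσ.measure_preimage (measurableSet_cell 1 (σ⁻¹ * ρ)).nullMeasurableSet]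
  congr 1
  ext z
  simp [cell, MeasurableEquiv.arrowCongr', Equiv.arrowCongr', Function.comp_def]

theorem eq_sort_of_mem_cell {σ ρ : Equiv.Perm (Fin n)} {z : Fin n → ℝ × ℝ}
    (hz : z ∈ cell σ ρ) :
    σ = Tuple.sort (fun a => (z a).1) ∧ ρ = Tuple.sort (fun a => (z a).2) :=
  ⟨Tuple.eq_sort_of_strictMono hz.1, Tuple.eq_sort_of_strictMono hz.2⟩

theorem pairwise_disjoint_cell :
    Pairwise (Function.onFun Disjoint fun g : Equiv.Perm (Fin n) × Equiv.Perm (Fin n) =>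
      cell g.1 g.2) := by
  intro g g' hne
  refine Set.disjoint_left.2 fun z hz hz' => hne ?_
  obtain ⟨hσ, hρ⟩ := eq_sort_of_mem_cell hz
  obtain ⟨hσ', hρ'⟩ := eq_sort_of_mem_cell hz'
  exact Prod.ext (hσ.trans hσ'.symm) (hρ.trans hρ'.symm)

theorem mem_cell_sort {z : Fin n → ℝ × ℝ} (h1 : Function.Injective fun a => (z a).1)
    (h2 : Function.Injective fun a => (z a).2) :
    z ∈ cell (Tuple.sort fun a => (z a).1) (Tuple.sort fun a => (z a).2) :=
  ⟨(Tuple.monotone_sort _).strictMono_of_injective (h1.comp (Equiv.injective _)),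
    (Tuple.monotone_sort _).strictMono_of_injective (h2.comp (Equiv.injective _))⟩

end Cells

section MomentEvent

variable {i j : ℕ} {μ : Measure (ℝ × ℝ)}

def momentRegion (i j : ℕ) (p : ℝ × ℝ) (m : Fin (i + j)) : Set (ℝ × ℝ) :=
  if (m : ℕ) < i then {q | q.1 < p.1} else {q | q.2 < p.2}

def momentEvent (i j : ℕ) : Set (Fin (i + j + 1) → ℝ × ℝ) :=
  {z | ∀ m : Fin (i + j), z m.succ ∈ momentRegion i j (z 0) m}

theorem measurableSet_setOf_forall_mem_momentRegion (i j : ℕ) :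
    MeasurableSet
      {pw : (ℝ × ℝ) × (Fin (i + j) → ℝ × ℝ) | ∀ m, pw.2 m ∈ momentRegion i j pw.1 m} := by
  simp only [Set.ofPred_forall]
  refine .iInter fun m => ?_
  have hm : Measurable fun pw : (ℝ × ℝ) × (Fin (i + j) → ℝ × ℝ) => pw.2 m :=
    (measurable_pi_apply m).comp measurable_snd
  by_cases hmi : (m : ℕ) < i
  · simpa [momentRegion, hmi] using measurableSet_lt hm.fst measurable_fst.fst
  · simpa [momentRegion, hmi] using measurableSet_lt hm.snd measurable_fst.snd

theorem Fin.prod_ite_lt_eq_pow_mul_pow (i j : ℕ) {M : Type*} [CommMonoid M] (a b : M) :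
    (∏ m : Fin (i + j), if (m : ℕ) < i then a else b) = a ^ i * b ^ j := by
  simp [Fin.prod_univ_add]

theorem IsPermuton.pi_momentEvent (h : IsPermuton μ) :
    Measure.pi (fun _ => μ) (momentEvent i j) =
      ∫⁻ p, ENNReal.ofReal p.1 ^ i * ENNReal.ofReal p.2 ^ j ∂μ := by
  have := h.isProbabilityMeasure_s15
  set s : Set ((ℝ × ℝ) × (Fin (i + j) → ℝ × ℝ)) :=
    {pw | ∀ m, pw.2 m ∈ momentRegion i j pw.1 m}
  have hsection : ∀ p ∈ Set.Icc (0 : ℝ) 1 ×ˢ Set.Icc (0 : ℝ) 1,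
      Measure.pi (fun _ => μ) (Prod.mk p ⁻¹' s) =
        ENNReal.ofReal p.1 ^ i * ENNReal.ofReal p.2 ^ j := by
    intro p hp
    have hpi : Prod.mk p ⁻¹' s = Set.univ.pi (momentRegion i j p) := by
      ext w; simp [s]
    rw [hpi, Measure.pi_pi, ← Fin.prod_ite_lt_eq_pow_mul_pow i j]
    refine Finset.prod_congr rfl fun m _ => ?_
    by_cases hmi : (m : ℕ) < i
    · simp [momentRegion, hmi, measure_lt_of_map_eq_uniform measurable_fst h.1 hp.1]
    · simp [momentRegion, hmi, measure_lt_of_map_eq_uniform measurable_snd h.2 hp.2]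
  change Measure.pi _ (MeasurableEquiv.piFinSuccAbove (fun _ => ℝ × ℝ) 0 ⁻¹' s) = _
  rw [pi_preimage_piFinSuccAbove μ 0 (measurableSet_setOf_forall_mem_momentRegion i j)]
  exact lintegral_congr_ae (by filter_upwards [h.ae_mem_Icc] using hsection)

theorem IsPermuton.integral_pow_mul_pow (h : IsPermuton μ) :
    ∫ p, p.1 ^ i * p.2 ^ j ∂μ = (Measure.pi (fun _ => μ) (momentEvent i j)).toReal := by
  have := h.isProbabilityMeasure_s15
  have hnonneg : 0 ≤ᵐ[μ] fun p : ℝ × ℝ => p.1 ^ i * p.2 ^ j := by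
    filter_upwards [h.ae_mem_Icc] with p hp
    exact mul_nonneg (pow_nonneg hp.1.1 _) (pow_nonneg hp.2.1 _)
  rw [integral_eq_lintegral_of_nonneg_ae hnonneg
    ((continuous_fst.pow i).mul (continuous_snd.pow j)).aestronglyMeasurable, h.pi_momentEvent]
  congr 1
  refine lintegral_congr_ae ?_
  filter_upwards [h.ae_mem_Icc] with p hp
  rw [ENNReal.ofReal_mul (pow_nonneg hp.1.1 _), ENNReal.ofReal_pow hp.1.1,
    ENNReal.ofReal_pow hp.2.1]

end MomentEvent

section Decomposition

variable {i j : ℕ} {μ : Measure (ℝ × ℝ)}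

def momentPatterns (i j : ℕ) :
    Finset (Equiv.Perm (Fin (i + j + 1)) × Equiv.Perm (Fin (i + j + 1))) :=
  {g | ∀ m : Fin (i + j),
    if (m : ℕ) < i then g.1⁻¹ m.succ < g.1⁻¹ 0 else g.2⁻¹ m.succ < g.2⁻¹ 0}

theorem mem_momentEvent_iff_of_mem_cell {σ ρ : Equiv.Perm (Fin (i + j + 1))}
    {z : Fin (i + j + 1) → ℝ × ℝ} (hz : z ∈ cell σ ρ) :
    z ∈ momentEvent i j ↔ (σ, ρ) ∈ momentPatterns i j := by
  simp only [momentEvent, momentPatterns, Finset.mem_filter, Finset.mem_univ, true_and,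
    Set.mem_ofPred_eq]
  refine forall_congr' fun m => ?_
  by_cases hmi : (m : ℕ) < i
  · simpa [momentRegion, hmi] using StrictMono.lt_iff_perm_inv_lt (f := fun a => (z a).1) hz.1
  · simpa [momentRegion, hmi] using StrictMono.lt_iff_perm_inv_lt (f := fun a => (z a).2) hz.2

theorem momentEvent_inter_injective :
    momentEvent i j ∩ {z | (Function.Injective fun a => (z a).1) ∧
      Function.Injective fun a => (z a).2} = ⋃ g ∈ momentPatterns i j, cell g.1 g.2 := by
  ext z
  simp only [Set.mem_inter_iff, Set.mem_ofPred_eq, Set.mem_iUnion, exists_prop]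
  constructor
  · rintro ⟨hzE, h1, h2⟩
    exact ⟨_, (mem_momentEvent_iff_of_mem_cell (mem_cell_sort h1 h2)).1 hzE, mem_cell_sort h1 h2⟩
  · rintro ⟨g, hg, hz⟩
    exact ⟨(mem_momentEvent_iff_of_mem_cell hz).2 hg, .of_strictMono_comp_perm hz.1,
      .of_strictMono_comp_perm hz.2⟩

theorem IsPermuton.pi_momentEvent_eq_sum (h : IsPermuton μ) :
    Measure.pi (fun _ => μ) (momentEvent i j) =
      ∑ g ∈ momentPatterns i j, Measure.pi (fun _ => μ) (cell g.1 g.2) := by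
  have := h.isProbabilityMeasure_s15
  have hinj : ∀ᵐ z ∂Measure.pi (fun _ : Fin (i + j + 1) => μ),
      (Function.Injective fun a => (z a).1) ∧ Function.Injective fun a => (z a).2 := by
    filter_upwards
      [ae_pi_injective measurable_fst (measure_eq_of_map_eq_uniform measurable_fst h.1),
        ae_pi_injective measurable_snd (measure_eq_of_map_eq_uniform measurable_snd h.2)]
      with z h1 h2 using ⟨h1, h2⟩
  rw [← measure_inter_conull (mem_ae_iff.1 hinj), momentEvent_inter_injective,
    measure_biUnion_finset (fun g _ g' _ hne => pairwise_disjoint_cell hne)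
      fun g _ => measurableSet_cell g.1 g.2]

theorem IsPermuton.integral_pow_mul_pow_eq_sum (h : IsPermuton μ) :
    ∫ p, p.1 ^ i * p.2 ^ j ∂μ = ∑ g ∈ momentPatterns i j,
      permDensity (g.2⁻¹ * g.1) μ / (i + j + 1).factorial := by
  have := h.isProbabilityMeasure_s15
  rw [h.integral_pow_mul_pow, h.pi_momentEvent_eq_sum,
    ENNReal.toReal_sum fun g _ => measure_ne_top _ _]
  refine Finset.sum_congr rfl fun g _ => ?_
  rw [pi_cell, permDensity_eq_cell, mul_inv_rev, inv_inv, mul_div_cancel_left₀]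
  exact_mod_cast (i + j + 1).factorial_ne_zero

theorem exists_integral_pow_mul_pow_eq_sum_permDensity (i j : ℕ) :
    ∃ (S : Finset (Equiv.Perm (Fin (i + j + 1)))) (C : Equiv.Perm (Fin (i + j + 1)) → ℝ),
      (∀ τ ∈ S, 0 < C τ) ∧
      ∀ μ : Measure (ℝ × ℝ), IsPermuton μ →
        ∫ p, p.1 ^ i * p.2 ^ j ∂μ = ∑ τ ∈ S, C τ * permDensity τ μ := by
  classical
  set pattern := fun g : Equiv.Perm (Fin (i + j + 1)) × Equiv.Perm (Fin (i + j + 1)) =>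
    g.2⁻¹ * g.1
  refine ⟨(momentPatterns i j).image pattern,
    fun τ => ((momentPatterns i j).filter (pattern · = τ)).card / (i + j + 1).factorial, ?_, ?_⟩
  · intro τ hτ
    obtain ⟨g, hg, rfl⟩ := Finset.mem_image.1 hτ
    have : 0 < ((momentPatterns i j).filter (pattern · = pattern g)).card :=
      Finset.card_pos.2 ⟨g, Finset.mem_filter.2 ⟨hg, rfl⟩⟩
    positivity
  · intro μ h
    rw [h.integral_pow_mul_pow_eq_sum, Finset.sum_comp (fun τ => permDensity τ μ / _) pattern]
    refine Finset.sum_congr rfl fun τ _ => ?_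
    rw [nsmul_eq_mul]
    ring

end Decomposition

theorem stmt15 (i j : ℕ) :
    (∃ (S : Finset (Equiv.Perm (Fin (i + j + 1)))) (C : Equiv.Perm (Fin (i + j + 1)) → ℝ),
      (∀ τ ∈ S, 0 < C τ) ∧
      ∀ μ : Measure (ℝ × ℝ), IsPermuton μ →
        ∫ p, p.1 ^ i * p.2 ^ j ∂μ = ∑ τ ∈ S, C τ * permDensity τ μ) ∧
    (∀ μ ν : Measure (ℝ × ℝ), IsPermuton μ → IsPermuton ν →
      (∀ (k : ℕ) (τ : Equiv.Perm (Fin k)), permDensity τ μ = permDensity τ ν) → μ = ν) := by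
  refine ⟨exists_integral_pow_mul_pow_eq_sum_permDensity i j, fun μ ν hμ hν hdens => ?_⟩
  have := hμ.isProbabilityMeasure_s15
  have := hν.isProbabilityMeasure_s15
  refine ext_of_integral_pow_mul_pow_eq (isCompact_Icc.prod isCompact_Icc)
    hμ.ae_mem_Icc hν.ae_mem_Icc fun a b => ?_
  simp only [hμ.integral_pow_mul_pow_eq_sum, hν.integral_pow_mul_pow_eq_sum, hdens]
end
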